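/- arXiv:2405.12793 — 6 statements merged into one kernel-verified Lean document; each statement's English description precedes it below -/
import Mathlib

section
/- With the notation of the contraction operator T_s, the unique fixed point u_s of T_s is Lipschitz continuous with Lip(u_s) ≤ Lip(A)/(1 − sγ) ≤ Lip(A)/(1 − γ), uniformly in s ∈ (0,1). -/
open MeasureTheory Filter Topology

theorem stmt2 {J X : Type*} [MetricSpace J] [MetricSpace X]
    [CompactSpace J] [CompactSpace X]
    [MeasurableSpace J] [BorelSpace J]
    (ν : Measure J) [IsProbabilityMeasure ν] [ν.IsOpenPosMeasure]
    (γ : ℝ) (hγ0 : 0 < γ) (hγ1 : γ < 1)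
    (φ : J → X → X)
    (hc : ∀ j₁ j₂ : J, ∀ x₁ x₂ : X,
      dist (φ j₁ x₁) (φ j₂ x₂) ≤ γ * (dist j₁ j₂ + dist x₁ x₂))
    (A : J → X → ℝ) (L : ℝ) (hL : 0 ≤ L)
    (hA : ∀ j₁ j₂ : J, ∀ x₁ x₂ : X,
      |A j₁ x₁ - A j₂ x₂| ≤ L * (dist j₁ j₂ + dist x₁ x₂))
    (s : ℝ) (hs0 : 0 < s) (hs1 : s < 1)
    (u : C(X, ℝ))
    (hfix : ∀ x : X,
      u x = Real.log (∫ j, Real.exp (A j x + s * u (φ j x)) ∂ν)) :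
    (∀ x₁ x₂ : X, |u x₁ - u x₂| ≤ L / (1 - s * γ) * dist x₁ x₂) ∧
      L / (1 - s * γ) ≤ L / (1 - γ) := by
  have hsγ : s * γ < 1 := by nlinarith
  have h1 : (0:ℝ) < 1 - s * γ := by linarith
  have h1γ : (0:ℝ) < 1 - γ := by linarith
  set c : ℝ := L / (1 - s * γ) with hc_def
  have hc0 : 0 ≤ c := div_nonneg hL h1.le
  have hcL : L + s * c * γ = c := by
    have := div_mul_cancel₀ L h1.ne'
    rw [← hc_def] at this
    linear_combination -this
  constructor
  · intro x y
    have hX : Nonempty X := ⟨x⟩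
    have hJ : Nonempty J := by
      by_contra h
      rw [not_nonempty_iff] at h
      have h2 := measure_univ (μ := ν)
      rw [Set.univ_eq_empty_iff.mpr h] at h2
      simp at h2
    -- continuity of the integrand in j, for fixed base point
    have hφcont : ∀ x₀ : X, Continuous fun j => φ j x₀ := by
      intro x₀
      apply (LipschitzWith.of_dist_le_mul (K := Real.toNNReal γ) ?_).continuous
      intro j₁ j₂
      rw [Real.coe_toNNReal γ hγ0.le]
      simpa using hc j₁ j₂ x₀ x₀
    have hgcont : ∀ x₀ : X, Continuous fun j => A j x₀ + s * u (φ j x₀) := by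
      intro x₀
      have h1 : Continuous fun j => A j x₀ := by
        apply (LipschitzWith.of_dist_le_mul (K := Real.toNNReal L) ?_).continuous
        intro j₁ j₂
        rw [Real.coe_toNNReal L hL, Real.dist_eq]
        simpa using hA j₁ j₂ x₀ x₀
      exact h1.add (continuous_const.mul (u.continuous.comp (hφcont x₀)))
    have hint : ∀ x₀ : X, Integrable (fun j => Real.exp (A j x₀ + s * u (φ j x₀))) ν := by
      intro x₀
      have := ((hgcont x₀).rexp.continuousOn).integrableOn_compact' (μ := ν)
        isCompact_univ MeasurableSet.univ
      rwa [integrableOn_univ] at this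
    have hpos : ∀ x₀ : X, 0 < ∫ j, Real.exp (A j x₀ + s * u (φ j x₀)) ∂ν := by
      intro x₀
      obtain ⟨j₀, -, hj₀⟩ := isCompact_univ.exists_isMinOn Set.univ_nonempty
        ((hgcont x₀).continuousOn)
      calc (0:ℝ) < Real.exp (A j₀ x₀ + s * u (φ j₀ x₀)) := Real.exp_pos _
        _ = ∫ _ : J, Real.exp (A j₀ x₀ + s * u (φ j₀ x₀)) ∂ν := by simp
        _ ≤ _ := integral_mono (integrable_const _) (hint x₀)
              (fun j => Real.exp_le_exp.mpr (hj₀ (Set.mem_univ j)))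
    -- max point of F
    obtain ⟨⟨a, b⟩, -, hab⟩ := isCompact_univ.exists_isMaxOn Set.univ_nonempty
      (Continuous.continuousOn (by fun_prop :
        Continuous fun p : X × X => u p.1 - u p.2 - c * dist p.1 p.2))
    set m : ℝ := u a - u b - c * dist a b with hm_def
    have hab' : ∀ p q : X, u p - u q - c * dist p q ≤ m := fun p q => hab (Set.mem_univ (p, q))
    -- key inequality at the max point
    have hfg : ∀ j : J, Real.exp (A j a + s * u (φ j a)) ≤
        Real.exp (c * dist a b + s * m) * Real.exp (A j b + s * u (φ j b)) := by
      intro j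
      rw [← Real.exp_add]
      apply Real.exp_le_exp.mpr
      have h1 : A j a - A j b ≤ L * dist a b := by
        have h := (abs_le.mp (hA j j a b)).2
        simpa using h
      have h2 : u (φ j a) - u (φ j b) ≤ c * (γ * dist a b) + m := by
        have h3 := hab' (φ j a) (φ j b)
        have h4 : dist (φ j a) (φ j b) ≤ γ * dist a b := by
          simpa using hc j j a b
        nlinarith
      have h5 := mul_le_mul_of_nonneg_left h2 hs0.le
      have h6 : (L + s * c * γ) * dist a b = c * dist a b := by rw [hcL]
      nlinarith [h5, h6]
    have hkey : u a - u b ≤ c * dist a b + s * m := by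
      rw [hfix a, hfix b]
      have hle : ∫ j, Real.exp (A j a + s * u (φ j a)) ∂ν ≤
          Real.exp (c * dist a b + s * m) * ∫ j, Real.exp (A j b + s * u (φ j b)) ∂ν := by
        rw [← integral_const_mul]
        exact integral_mono (hint a) ((hint b).const_mul _) hfg
      have h7 := (Real.log_le_log_iff (hpos a)
        (mul_pos (Real.exp_pos _) (hpos b))).mpr hle
      rw [Real.log_mul (Real.exp_ne_zero _) (ne_of_gt (hpos b)), Real.log_exp] at h7
      linarith
    have hm0 : m ≤ 0 := by
      rw [hm_def] at hkey ⊢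
      nlinarith
    rw [abs_sub_le_iff]
    constructor
    · have := hab' x y
      nlinarith [hm0]
    · have := hab' y x
      rw [dist_comm y x] at this
      nlinarith [hm0]
  · rw [div_le_div_iff₀ h1 h1γ]
    have h8 : s * γ ≤ γ := mul_le_of_le_one_left hγ0.le hs1.le
    nlinarith [mul_le_mul_of_nonneg_left h8 hL]
end

section
/- (Laplace principle with varying integrands.) Let Y, Z be compact metric spaces, μ a finite Borel measure on Y with supp(μ) = Y, and W_β: Y×Z → ℝ measurable functions converging uniformly, as β → +∞, to a continuous function W: Y×Z → ℝ. Then (1/β)·log ∫_Y exp(β·W_β(y,z)) dμ(y) converges uniformly on Z to the function z ↦ sup_{y∈Y} W(y,z). -/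
open MeasureTheory Filter Topology Metric Set

theorem stmt3 {Y Z : Type*} [MetricSpace Y] [MetricSpace Z]
    [CompactSpace Y] [CompactSpace Z] [Nonempty Y]
    [MeasurableSpace Y] [BorelSpace Y] [MeasurableSpace Z] [BorelSpace Z]
    (μ : Measure Y) [IsFiniteMeasure μ] [μ.IsOpenPosMeasure]
    (W : Y × Z → ℝ) (hW : Continuous W)
    (Wb : ℝ → Y × Z → ℝ) (hmeas : ∀ β : ℝ, Measurable (Wb β))
    (hunif : TendstoUniformly Wb W atTop) :
    TendstoUniformly
      (fun β z => (1 / β) * Real.log (∫ y, Real.exp (β * Wb β (y, z)) ∂μ))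
      (fun z => ⨆ y : Y, W (y, z)) atTop := by
  rw [Metric.tendstoUniformly_iff]
  intro ε hε
  set ε' : ℝ := ε / 4 with hε'def
  have hε' : 0 < ε' := by positivity
  -- global bound on W
  obtain ⟨M, hM⟩ : ∃ M : ℝ, ∀ p, ‖W p‖ ≤ M := by
    obtain ⟨M, hM⟩ := (isBounded_iff_forall_norm_le).mp (isCompact_range hW).isBounded
    exact ⟨M, fun p => hM _ ⟨p, rfl⟩⟩
  -- uniform continuity of W
  obtain ⟨δ, hδ, hδW⟩ := Metric.uniformContinuous_iff.mp
    (CompactSpace.uniformContinuous_of_continuous hW) ε' hε'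
  -- finite cover of Y by δ/2 balls
  obtain ⟨t, ht⟩ := isCompact_univ.elim_finite_subcover
    (fun y : Y => Metric.ball y (δ / 2)) (fun y => isOpen_ball)
    (fun y _ => Set.mem_iUnion.2 ⟨y, Metric.mem_ball_self (by positivity)⟩)
  have htne : t.Nonempty := by
    obtain ⟨y⟩ := ‹Nonempty Y›
    obtain ⟨x, hx, _⟩ := Set.mem_iUnion₂.mp (ht (Set.mem_univ y))
    exact ⟨x, hx⟩
  set c : ℝ := t.inf' htne (fun x => (μ (Metric.ball x (δ / 2))).toReal) with hcdef
  have hc : 0 < c := by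
    rw [hcdef, Finset.lt_inf'_iff]
    intro x _
    exact ENNReal.toReal_pos (Metric.measure_ball_pos μ x (by positivity)).ne'
      (measure_ne_top μ _)
  set T : ℝ := (μ Set.univ).toReal with hTdef
  have hT : 0 < T :=
    ENNReal.toReal_pos (isOpen_univ.measure_pos μ Set.univ_nonempty).ne' (measure_ne_top μ _)
  set β₀ : ℝ := max 1 ((|Real.log T| + |Real.log c|) / ε') with hβ₀def
  have hWb' : ∀ᶠ β in atTop, ∀ p, dist (W p) (Wb β p) < ε' :=
    Metric.tendstoUniformly_iff.mp hunif ε' hε'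
  filter_upwards [hWb', eventually_ge_atTop β₀] with β hβW hββ₀
  intro z
  have hβ1 : (1 : ℝ) ≤ β := le_trans (le_max_left _ _) hββ₀
  have hβpos : 0 < β := lt_of_lt_of_le one_pos hβ1
  have hlogs : |Real.log T| + |Real.log c| ≤ ε' * β := by
    have := le_trans (le_max_right 1 ((|Real.log T| + |Real.log c|) / ε')) hββ₀
    rw [div_le_iff₀ hε'] at this
    linarith [this]
  -- max point of W(·, z)
  obtain ⟨y₀, hy₀'⟩ :=
    (hW.comp (by continuity : Continuous fun y : Y => (y, z))).exists_forall_ge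
      (by rw [Filter.cocompact_eq_bot]; exact tendsto_bot)
  simp only [Function.comp] at hy₀'
  have hbdd : BddAbove (Set.range fun y : Y => W (y, z)) :=
    ⟨W (y₀, z), fun r ⟨y, hy⟩ => hy ▸ hy₀' y⟩
  have hF : (⨆ y : Y, W (y, z)) = W (y₀, z) :=
    le_antisymm (ciSup_le hy₀') (le_ciSup hbdd y₀)
  -- bounds relating Wb and W
  have hub : ∀ y : Y, Wb β (y, z) ≤ W (y, z) + ε' := by
    intro y
    have := hβW (y, z)
    rw [Real.dist_eq] at this
    have := abs_lt.mp this
    linarith [this.1, this.2]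
  have hlb : ∀ y : Y, W (y, z) - ε' ≤ Wb β (y, z) := by
    intro y
    have := hβW (y, z)
    rw [Real.dist_eq] at this
    have := abs_lt.mp this
    linarith [this.1, this.2]
  -- integrand
  set g : Y → ℝ := fun y => Real.exp (β * Wb β (y, z)) with hgdef
  have hgm : Measurable g :=
    Real.measurable_exp.comp
      (measurable_const.mul ((hmeas β).comp (measurable_id.prodMk measurable_const)))
  have hgpos : ∀ y, 0 < g y := fun y => Real.exp_pos _
  have hgi : Integrable g μ := by
    refine Integrable.mono' (integrable_const (Real.exp (β * (M + ε'))))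
      hgm.aestronglyMeasurable (Filter.Eventually.of_forall fun y => ?_)
    rw [Real.norm_eq_abs, abs_of_pos (hgpos y)]
    refine Real.exp_le_exp.mpr (mul_le_mul_of_nonneg_left ?_ hβpos.le)
    have h1 : W (y, z) ≤ M := le_trans (le_abs_self _) (hM (y, z))
    linarith [hub y]
  -- upper bound on the integral
  have hI_ub : ∫ y, g y ∂μ ≤ Real.exp (β * (W (y₀, z) + ε')) * T := by
    calc ∫ y, g y ∂μ ≤ ∫ _, Real.exp (β * (W (y₀, z) + ε')) ∂μ := by
          refine integral_mono hgi (integrable_const _) fun y => ?_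
          exact Real.exp_le_exp.mpr (mul_le_mul_of_nonneg_left
            (by linarith [hub y, hy₀' y]) hβpos.le)
      _ = Real.exp (β * (W (y₀, z) + ε')) * T := by
          rw [integral_const, smul_eq_mul, mul_comm]; rfl
  -- lower bound on the integral
  obtain ⟨x, hxt, hy₀x⟩ := Set.mem_iUnion₂.mp (ht (Set.mem_univ y₀))
  have hcball : c ≤ (μ (Metric.ball x (δ / 2))).toReal :=
    Finset.inf'_le _ hxt
  have hballlb : ∀ y ∈ Metric.ball x (δ / 2),
      Real.exp (β * (W (y₀, z) - 2 * ε')) ≤ g y := by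
    intro y hy
    have hdyy : dist y y₀ < δ := by
      have h1 := mem_ball.mp hy
      have h2 := mem_ball.mp hy₀x
      calc dist y y₀ ≤ dist y x + dist x y₀ := dist_triangle _ _ _
        _ < δ / 2 + δ / 2 := by rw [dist_comm x y₀]; linarith
        _ = δ := by ring
    have hdp : dist ((y, z) : Y × Z) (y₀, z) < δ := by
      rw [Prod.dist_eq]
      simp only [dist_self]
      exact max_lt hdyy hδ
    have hWd := hδW hdp
    rw [Real.dist_eq] at hWd
    have hWd' := abs_lt.mp hWd
    refine Real.exp_le_exp.mpr (mul_le_mul_of_nonneg_left ?_ hβpos.le)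
    have := hlb y
    linarith [hWd'.1, hWd'.2]
  have hI_lb : Real.exp (β * (W (y₀, z) - 2 * ε')) * c ≤ ∫ y, g y ∂μ := by
    have h1 : Real.exp (β * (W (y₀, z) - 2 * ε')) * (μ (Metric.ball x (δ / 2))).toReal
        ≤ ∫ y in Metric.ball x (δ / 2), g y ∂μ :=
      by
        have h := setIntegral_ge_of_const_le_real measurableSet_ball (measure_ne_top μ _)
          hballlb (hgi.integrableOn)
        simp only [smul_eq_mul, Measure.real] at h
        linarith [mul_comm (Real.exp (β * (W (y₀, z) - 2 * ε'))) (μ (Metric.ball x (δ / 2))).toReal]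
    have h2 : ∫ y in Metric.ball x (δ / 2), g y ∂μ ≤ ∫ y, g y ∂μ :=
      setIntegral_le_integral hgi (Filter.Eventually.of_forall fun y => (hgpos y).le)
    have h3 : Real.exp (β * (W (y₀, z) - 2 * ε')) * c
        ≤ Real.exp (β * (W (y₀, z) - 2 * ε')) * (μ (Metric.ball x (δ / 2))).toReal :=
      mul_le_mul_of_nonneg_left hcball (Real.exp_pos _).le
    linarith
  have hIpos : 0 < ∫ y, g y ∂μ :=
    lt_of_lt_of_le (by positivity) hI_lb
  -- log bounds
  have hlog_ub : Real.log (∫ y, g y ∂μ) ≤ β * (W (y₀, z) + ε') + Real.log T := by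
    calc Real.log (∫ y, g y ∂μ) ≤ Real.log (Real.exp (β * (W (y₀, z) + ε')) * T) :=
          Real.log_le_log hIpos hI_ub
      _ = β * (W (y₀, z) + ε') + Real.log T := by
          rw [Real.log_mul (Real.exp_ne_zero _) hT.ne', Real.log_exp]
  have hlog_lb : β * (W (y₀, z) - 2 * ε') + Real.log c ≤ Real.log (∫ y, g y ∂μ) := by
    calc β * (W (y₀, z) - 2 * ε') + Real.log c
        = Real.log (Real.exp (β * (W (y₀, z) - 2 * ε')) * c) := by
          rw [Real.log_mul (Real.exp_ne_zero _) hc.ne', Real.log_exp]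
      _ ≤ Real.log (∫ y, g y ∂μ) := Real.log_le_log (by positivity) hI_lb
  -- conclude
  have hlogT : (1 / β) * |Real.log T| ≤ ε' := by
    rw [one_div, inv_mul_le_iff₀ hβpos]
    nlinarith [abs_nonneg (Real.log c)]
  have hlogc : (1 / β) * |Real.log c| ≤ ε' := by
    rw [one_div, inv_mul_le_iff₀ hβpos]
    nlinarith [abs_nonneg (Real.log T)]
  have hβinv : 0 < 1 / β := by positivity
  have hfin_ub : (1 / β) * Real.log (∫ y, g y ∂μ) ≤ W (y₀, z) + 2 * ε' := by
    have h1 := mul_le_mul_of_nonneg_left hlog_ub hβinv.le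
    have h2 : (1 / β) * (β * (W (y₀, z) + ε')) = W (y₀, z) + ε' := by
      field_simp
    have h3 : (1 / β) * Real.log T ≤ (1 / β) * |Real.log T| :=
      mul_le_mul_of_nonneg_left (le_abs_self _) hβinv.le
    rw [mul_add, h2] at h1
    linarith
  have hfin_lb : W (y₀, z) - 3 * ε' ≤ (1 / β) * Real.log (∫ y, g y ∂μ) := by
    have h1 := mul_le_mul_of_nonneg_left hlog_lb hβinv.le
    have h2 : (1 / β) * (β * (W (y₀, z) - 2 * ε')) = W (y₀, z) - 2 * ε' := by
      field_simp
    have h3 : -((1 / β) * |Real.log c|) ≤ (1 / β) * Real.log c := by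
      have := mul_le_mul_of_nonneg_left (neg_abs_le (Real.log c)) hβinv.le
      linarith [this]
    rw [mul_add, h2] at h1
    linarith
  rw [Real.dist_eq, hF, abs_lt]
  constructor <;> [skip; skip] <;>
    · simp only [hε'def] at hfin_ub hfin_lb ⊢
      linarith
end

section
/- The limit lim_{β→+∞} (1/β)·log λ_{βA} exists and equals m(A) := sup_{π ∈ H} ∫ A dπ, where H is the set of holonomic probabilities on J×X. -/
open MeasureTheory Filter Topology

set_option linter.unusedSectionVars false
set_option maxHeartbeats 2000000

/-- A Borel probability `π` on `J × X` is holonomic for the IFS `φ` if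
`∫ g(x) dπ(j,x) = ∫ g(φ_j(x)) dπ(j,x)` for every continuous `g`. -/
def Holonomic {J X : Type*} [MeasurableSpace J] [MeasurableSpace X]
    [TopologicalSpace X] (φ : J → X → X) (π : Measure (J × X)) : Prop :=
  IsProbabilityMeasure π ∧
    ∀ g : C(X, ℝ), (∫ p, g p.2 ∂π) = ∫ p, g (φ p.1 p.2) ∂π

lemma aux_integrable_dirac {α : Type*} [MeasurableSpace α] [MeasurableSingletonClass α]
    {f : α → ℝ} (hf : StronglyMeasurable f) (a : α) : Integrable f (Measure.dirac a) := by
  refine ⟨hf.aestronglyMeasurable, ?_⟩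
  simp [HasFiniteIntegral, lintegral_dirac]

lemma aux_integrable' {Z : Type*} [MetricSpace Z] [CompactSpace Z] [MeasurableSpace Z]
    [BorelSpace Z] {f : Z → ℝ} (hf : Continuous f) (μ : Measure Z) [IsFiniteMeasure μ] :
    Integrable f μ :=
  hf.integrable_of_hasCompactSupport (HasCompactSupport.of_compactSpace f)

lemma aux_bound {Z : Type*} [TopologicalSpace Z] [CompactSpace Z] [Nonempty Z]
    {f : Z → ℝ} (hf : Continuous f) : ∃ C : ℝ, ∀ z, |f z| ≤ C := by
  obtain ⟨z, -, hz⟩ := isCompact_univ.exists_isMaxOn Set.univ_nonempty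
    ((continuous_abs.comp hf).continuousOn (s := Set.univ))
  exact ⟨|f z|, fun y => hz (Set.mem_univ y)⟩

section Aux

variable {J X : Type*} [MetricSpace J] [MetricSpace X]
    [CompactSpace J] [CompactSpace X] [Nonempty J] [Nonempty X]
    [MeasurableSpace J] [BorelSpace J] [MeasurableSpace X] [BorelSpace X]

lemma aux_cont_pair {Y : Type*} [PseudoMetricSpace Y] {c : ℝ} {f : J → X → Y}
    (hf : ∀ j₁ j₂ : J, ∀ x₁ x₂ : X,
      dist (f j₁ x₁) (f j₂ x₂) ≤ c * (dist j₁ j₂ + dist x₁ x₂)) :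
    Continuous fun p : J × X => f p.1 p.2 := by
  set c' : ℝ := max c 1 with hc'def
  have hc'0 : (0:ℝ) < c' := lt_max_of_lt_right one_pos
  rw [Metric.continuous_iff]
  intro b ε hε
  refine ⟨ε / (2 * c'), by positivity, fun a ha => ?_⟩
  have h1 : dist a.1 b.1 ≤ dist a b := by rw [Prod.dist_eq]; exact le_max_left _ _
  have h2 : dist a.2 b.2 ≤ dist a b := by rw [Prod.dist_eq]; exact le_max_right _ _
  calc dist (f a.1 a.2) (f b.1 b.2) ≤ c * (dist a.1 b.1 + dist a.2 b.2) := hf _ _ _ _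
    _ ≤ c' * (dist a.1 b.1 + dist a.2 b.2) := by
        apply mul_le_mul_of_nonneg_right (le_max_left _ _) (by positivity)
    _ ≤ c' * (dist a b + dist a b) := by
        apply mul_le_mul_of_nonneg_left (by linarith) hc'0.le
    _ = 2 * c' * dist a b := by ring
    _ < 2 * c' * (ε / (2 * c')) := mul_lt_mul_of_pos_left ha (by positivity)
    _ = ε := by field_simp

lemma aux_ball (ν : Measure J) [IsProbabilityMeasure ν] [ν.IsOpenPosMeasure]
    {ε : ℝ} (hε : 0 < ε) :
    ∃ c > 0, ∀ j : J, c ≤ (ν (Metric.ball j ε)).toReal := by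
  obtain ⟨t, ht⟩ := isCompact_univ.elim_finite_subcover
    (fun j : J => Metric.ball j (ε / 2)) (fun j => Metric.isOpen_ball)
    (fun x _ => Set.mem_iUnion.2 ⟨x, Metric.mem_ball_self (by positivity)⟩)
  have hne : t.Nonempty := by
    rcases Set.mem_iUnion₂.1 (ht (Set.mem_univ (Classical.arbitrary J))) with ⟨i, hi, -⟩
    exact ⟨i, hi⟩
  refine ⟨t.inf' hne fun i => (ν (Metric.ball i (ε / 2))).toReal, ?_, fun j => ?_⟩
  · rw [gt_iff_lt, Finset.lt_inf'_iff]
    intro i _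
    exact ENNReal.toReal_pos (Metric.measure_ball_pos ν i (by positivity)).ne'
      (measure_ne_top ν _)
  · rcases Set.mem_iUnion₂.1 (ht (Set.mem_univ j)) with ⟨i, hi, hji⟩
    refine (Finset.inf'_le _ hi).trans ?_
    apply ENNReal.toReal_mono (measure_ne_top ν _)
    apply measure_mono
    intro z hz
    rw [Metric.mem_ball] at *
    calc dist z j ≤ dist z i + dist i j := dist_triangle _ _ _
      _ < ε / 2 + ε / 2 := by
          have := Metric.mem_ball.1 hji
          rw [dist_comm i j]
          exact add_lt_add hz this
      _ = ε := by ring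

lemma aux_log_lip (γ : ℝ) (hγ0 : 0 < γ) (hγ1 : γ < 1) (φ : J → X → X)
    (hc : ∀ j₁ j₂ : J, ∀ x₁ x₂ : X,
      dist (φ j₁ x₁) (φ j₂ x₂) ≤ γ * (dist j₁ j₂ + dist x₁ x₂))
    (ν : Measure J) [IsProbabilityMeasure ν]
    (F : J → X → ℝ) (M : ℝ) (hM : 0 ≤ M)
    (hF : ∀ j : J, ∀ x₁ x₂ : X, F j x₁ - F j x₂ ≤ M * dist x₁ x₂)
    (hFc : ∀ x : X, Continuous fun j : J => F j x)
    (hφc : ∀ x : X, Continuous fun j : J => φ j x)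
    (h : C(X, ℝ)) (lam : ℝ) (hlam : 0 < lam) (hpos : ∀ x, 0 < h x)
    (heig : ∀ x : X, (∫ j, Real.exp (F j x) * h (φ j x) ∂ν) = lam * h x) :
    ∀ x y : X, Real.log (h x) - Real.log (h y) ≤ M / (1 - γ) * dist x y := by
  have h1γ : (0:ℝ) < 1 - γ := by linarith
  have hKnn : 0 ≤ M / (1 - γ) := div_nonneg hM h1γ.le
  intro x y
  refine le_of_forall_pos_le_add fun ε hε => ?_
  have hvc : Continuous fun z : X => Real.log (h z) :=
    h.continuous.log fun z => (hpos z).ne'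
  have huc := CompactSpace.uniformContinuous_of_continuous hvc
  rw [Metric.uniformContinuous_iff] at huc
  obtain ⟨δ, hδ0, hδ⟩ := huc ε hε
  obtain ⟨n, hn⟩ : ∃ n : ℕ, γ ^ n * dist x y < δ := by
    have ht : Tendsto (fun n : ℕ => γ ^ n * dist x y) atTop (𝓝 (0 * dist x y)) :=
      (tendsto_pow_atTop_nhds_zero_of_lt_one hγ0.le hγ1).mul_const _
    rw [zero_mul] at ht
    exact (ht.eventually_lt_const hδ0).exists
  suffices H : ∀ n : ℕ, ∀ x y : X, γ ^ n * dist x y < δ →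
      Real.log (h x) - Real.log (h y) ≤ M / (1 - γ) * dist x y + ε from H n x y hn
  intro n
  induction n with
  | zero =>
    intro x y hxy
    rw [pow_zero, one_mul] at hxy
    have h2 : |Real.log (h x) - Real.log (h y)| < ε := by
      rw [← Real.dist_eq]; exact hδ hxy
    have h3 := (abs_le.1 h2.le).2
    nlinarith [mul_nonneg hKnn (dist_nonneg (x := x) (y := y))]
  | succ n ih =>
    intro x y hxy
    set d := dist x y with hd
    set E : ℝ := M * d + (M / (1 - γ) * (γ * d) + ε) with hEdef
    have key : ∀ j : J, Real.exp (F j x) * h (φ j x) ≤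
        Real.exp E * (Real.exp (F j y) * h (φ j y)) := by
      intro j
      have hdφ : dist (φ j x) (φ j y) ≤ γ * d := by
        have := hc j j x y; simpa using this
      have h1 : Real.log (h (φ j x)) - Real.log (h (φ j y)) ≤
          M / (1 - γ) * dist (φ j x) (φ j y) + ε := by
        apply ih
        calc γ ^ n * dist (φ j x) (φ j y) ≤ γ ^ n * (γ * d) :=
              mul_le_mul_of_nonneg_left hdφ (pow_nonneg hγ0.le n)
          _ = γ ^ (n + 1) * d := by ring
          _ < δ := hxy
      have h1' : Real.log (h (φ j x)) - Real.log (h (φ j y)) ≤ M / (1 - γ) * (γ * d) + ε := by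
        have := mul_le_mul_of_nonneg_left hdφ hKnn; linarith
      have h2 : h (φ j x) ≤ Real.exp (M / (1 - γ) * (γ * d) + ε) * h (φ j y) := by
        rw [(Real.exp_log (hpos (φ j x))).symm, (Real.exp_log (hpos (φ j y))).symm,
          ← Real.exp_add]
        exact Real.exp_le_exp.2 (by linarith)
      have h3 : Real.exp (F j x) ≤ Real.exp (M * d) * Real.exp (F j y) := by
        rw [← Real.exp_add]; exact Real.exp_le_exp.2 (by linarith [hF j x y])
      calc Real.exp (F j x) * h (φ j x)
          ≤ (Real.exp (M * d) * Real.exp (F j y)) *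
            (Real.exp (M / (1 - γ) * (γ * d) + ε) * h (φ j y)) :=
            mul_le_mul h3 h2 (hpos _).le (by positivity)
        _ = Real.exp E * (Real.exp (F j y) * h (φ j y)) := by
            simp only [hEdef, Real.exp_add]; ring
    have hcy : Continuous fun j : J => Real.exp (F j y) * h (φ j y) :=
      (Real.continuous_exp.comp (hFc y)).mul (h.continuous.comp (hφc y))
    have hcx : Continuous fun j : J => Real.exp (F j x) * h (φ j x) :=
      (Real.continuous_exp.comp (hFc x)).mul (h.continuous.comp (hφc x))
    have hint := integral_mono (aux_integrable' hcx ν)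
      ((aux_integrable' hcy ν).const_mul (Real.exp E)) key
    rw [heig x, integral_const_mul, heig y] at hint
    have h4 : h x ≤ Real.exp E * h y := by
      have h5 : lam * h x ≤ lam * (Real.exp E * h y) := by linarith
      exact le_of_mul_le_mul_left h5 hlam
    have h6 : Real.log (h x) ≤ E + Real.log (h y) := by
      have h7 := (Real.log_le_log_iff (hpos x) (mul_pos (Real.exp_pos E) (hpos y))).2 h4
      rwa [Real.log_mul (Real.exp_ne_zero E) (hpos y).ne', Real.log_exp] at h7
    have hE : E = M / (1 - γ) * d + ε := by
      rw [hEdef]; field_simp; ring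
    rw [hE] at h6
    linarith

lemma aux_periodic_holonomic (φ : J → X → X) (hφc : Continuous fun p : J × X => φ p.1 p.2)
    (A : J → X → ℝ) (hAc : Continuous fun p : J × X => A p.1 p.2)
    (k : ℕ) (hk : 0 < k) (w : ℕ → J) (q : ℕ → X)
    (hq : ∀ i, q (i + 1) = φ (w i) (q i)) (hper : q k = q 0) :
    ∃ π : Measure (J × X), Holonomic φ π ∧
      (∫ p, A p.1 p.2 ∂π) = (k : ℝ)⁻¹ * ∑ i ∈ Finset.range k, A (w i) (q i) := by
  set π : Measure (J × X) :=
    (k : ENNReal)⁻¹ • ∑ i ∈ Finset.range k, Measure.dirac (w i, q i) with hπdef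
  have hk0 : (k : ENNReal) ≠ 0 := Nat.cast_ne_zero.2 hk.ne'
  have key : ∀ f : (J × X) → ℝ, Continuous f →
      (∫ p, f p ∂π) = (k : ℝ)⁻¹ * ∑ i ∈ Finset.range k, f (w i, q i) := by
    intro f hf
    rw [hπdef, integral_smul_measure,
      integral_finset_sum_measure (fun i _ => aux_integrable_dirac hf.stronglyMeasurable _)]
    simp only [integral_dirac, smul_eq_mul, ENNReal.toReal_inv, ENNReal.toReal_natCast]
  have hprob : IsProbabilityMeasure π := by
    constructor
    rw [hπdef]
    rw [Measure.smul_apply, Measure.finset_sum_apply]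
    simp only [measure_univ, Finset.sum_const, Finset.card_range, nsmul_eq_mul, mul_one,
      smul_eq_mul]
    exact ENNReal.inv_mul_cancel hk0 (ENNReal.natCast_ne_top k)
  have hshift : ∀ g : C(X, ℝ),
      ∑ i ∈ Finset.range k, g (q (i + 1)) = ∑ i ∈ Finset.range k, g (q i) := by
    intro g
    rcases Nat.exists_eq_succ_of_ne_zero hk.ne' with ⟨k', rfl⟩
    rw [Finset.sum_range_succ, Finset.sum_range_succ']
    rw [hper]
  refine ⟨π, ⟨hprob, fun g => ?_⟩, ?_⟩
  · rw [key (fun p => g p.2) (g.continuous.comp continuous_snd),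
      key (fun p => g (φ p.1 p.2)) (g.continuous.comp hφc)]
    congr 1
    calc ∑ i ∈ Finset.range k, g (q i)
        = ∑ i ∈ Finset.range k, g (q (i + 1)) := (hshift g).symm
      _ = ∑ i ∈ Finset.range k, g (φ (w i) (q i)) := by
          apply Finset.sum_congr rfl; intro i _; rw [hq i]
  · exact key _ hAc

lemma aux_orbit (γ : ℝ) (hγ0 : 0 < γ) (hγ1 : γ < 1) (φ : J → X → X)
    (hc : ∀ j₁ j₂ : J, ∀ x₁ x₂ : X,
      dist (φ j₁ x₁) (φ j₂ x₂) ≤ γ * (dist j₁ j₂ + dist x₁ x₂))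
    (ν : Measure J) [IsProbabilityMeasure ν]
    (A : J → X → ℝ) (L₀ : ℝ) (hL₀ : 0 ≤ L₀)
    (hA₀ : ∀ j₁ j₂ : J, ∀ x₁ x₂ : X,
      |A j₁ x₁ - A j₂ x₂| ≤ L₀ * (dist j₁ j₂ + dist x₁ x₂))
    (β : ℝ) (hβ : 0 < β) (h : C(X, ℝ)) (lam : ℝ) (hlam : 0 < lam)
    (hpos : ∀ x, 0 < h x)
    (heig : ∀ x : X, (∫ j, Real.exp (β * A j x) * h (φ j x) ∂ν) = lam * h x)
    (η : ℝ) (hη : 0 < η) :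
    ∃ π : Measure (J × X), Holonomic φ π ∧
      (1 / β) * Real.log lam ≤ (∫ p, A p.1 p.2 ∂π) + η := by
  classical
  have h1γ : (0:ℝ) < 1 - γ := by linarith
  have hφc : Continuous fun p : J × X => φ p.1 p.2 := aux_cont_pair hc
  have hAc : Continuous fun p : J × X => A p.1 p.2 :=
    aux_cont_pair (fun j₁ j₂ x₁ x₂ => by rw [Real.dist_eq]; exact hA₀ _ _ _ _)
  have hφcx : ∀ x : X, Continuous fun j : J => φ j x := fun x =>
    hφc.comp (continuous_id.prodMk continuous_const)
  have hAcx : ∀ x : X, Continuous fun j : J => A j x := fun x =>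
    hAc.comp (continuous_id.prodMk continuous_const)
  set v : X → ℝ := fun x => Real.log (h x) with hvdef
  have hvc : Continuous v := h.continuous.log fun z => (hpos z).ne'
  obtain ⟨V, hV⟩ := aux_bound hvc
  have hV0 : 0 ≤ V := le_trans (abs_nonneg _) (hV (Classical.arbitrary X))
  -- selection of an optimal j for each x
  have sel : ∀ x : X, ∃ j : J, Real.log lam + v x ≤ β * A j x + v (φ j x) := by
    intro x
    set f : J → ℝ := fun j => Real.exp (β * A j x) * h (φ j x) with hfdef
    have hfc : Continuous f :=
      (Real.continuous_exp.comp (continuous_const.mul (hAcx x))).mul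
        (h.continuous.comp (hφcx x))
    obtain ⟨j₀, -, hj₀⟩ := isCompact_univ.exists_isMaxOn Set.univ_nonempty hfc.continuousOn
    refine ⟨j₀, ?_⟩
    have hle : lam * h x ≤ f j₀ := by
      rw [← heig x]
      calc (∫ j, Real.exp (β * A j x) * h (φ j x) ∂ν) ≤ ∫ _, f j₀ ∂ν :=
            integral_mono (aux_integrable' hfc ν) (integrable_const _)
              fun j => hj₀ (Set.mem_univ j)
        _ = f j₀ := by simp
    have hfj₀ : 0 < f j₀ := mul_pos (Real.exp_pos _) (hpos _)
    have h1 := (Real.log_le_log_iff (mul_pos hlam (hpos x)) hfj₀).2 hle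
    rw [Real.log_mul hlam.ne' (hpos x).ne'] at h1
    have h2 : Real.log (f j₀) = β * A j₀ x + v (φ j₀ x) := by
      rw [hfdef]
      simp only []
      rw [Real.log_mul (Real.exp_ne_zero _) (hpos _).ne', Real.log_exp, hvdef]
    rw [h2] at h1
    exact h1
  let jsel : X → J := fun x => (sel x).choose
  have hjsel : ∀ x, Real.log lam + v x ≤ β * A (jsel x) x + v (φ (jsel x) x) :=
    fun x => (sel x).choose_spec
  let step : X → X := fun x => φ (jsel x) x
  let xs : ℕ → X := fun n => step^[n] (Classical.arbitrary X)
  have hxs : ∀ n, xs (n + 1) = φ (jsel (xs n)) (xs n) := by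
    intro n
    show step^[n + 1] _ = _
    rw [Function.iterate_succ_apply']
  have key1 : ∀ n, Real.log lam ≤ β * A (jsel (xs n)) (xs n) + v (xs (n + 1)) - v (xs n) := by
    intro n
    have h1 := hjsel (xs n)
    rw [← hxs n] at h1
    linarith
  have key2 : ∀ n k : ℕ, (k : ℝ) * Real.log lam ≤
      β * (∑ i ∈ Finset.range k, A (jsel (xs (n + i))) (xs (n + i))) +
        (v (xs (n + k)) - v (xs n)) := by
    intro n k
    induction k with
    | zero => simp
    | succ k ih =>
      rw [Finset.sum_range_succ, mul_add]
      have h2 := key1 (n + k)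
      have e : n + (k + 1) = (n + k) + 1 := by omega
      rw [e]
      push_cast
      linarith
  -- parameters
  set ε₁ : ℝ := η * (1 - γ) / (2 * (L₀ + 1)) with hε₁def
  have hε₁ : 0 < ε₁ := by
    apply div_pos (mul_pos hη h1γ) (by positivity)
  have hcε₁ : L₀ * (ε₁ / (1 - γ)) ≤ η / 2 := by
    have e2 : ε₁ / (1 - γ) = η / (2 * (L₀ + 1)) := by
      rw [hε₁def]; field_simp
    have h9 : L₀ * (η / (2 * (L₀ + 1))) = L₀ * η / (2 * (L₀ + 1)) := by ring
    rw [e2, h9, div_le_div_iff₀ (by positivity) (by norm_num)]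
    nlinarith [hη.le, hL₀]
  obtain ⟨K', hK'⟩ := exists_nat_ge (4 * V / (β * η))
  set K : ℕ := K' + 1 with hKdef
  -- pigeonhole to find an almost-periodic block
  obtain ⟨t, ht⟩ := isCompact_univ.elim_finite_subcover
    (fun y : X => Metric.ball y (ε₁ / 2)) (fun y => Metric.isOpen_ball)
    (fun x _ => Set.mem_iUnion.2 ⟨x, Metric.mem_ball_self (by positivity)⟩)
  have hcov : ∀ z : X, ∃ y, y ∈ t ∧ z ∈ Metric.ball y (ε₁ / 2) := by
    intro z
    rcases Set.mem_iUnion₂.1 (ht (Set.mem_univ z)) with ⟨y, hy, hz⟩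
    exact ⟨y, hy, hz⟩
  set cmap : ℕ → X := fun i => (hcov (xs (i * K))).choose with hcmapdef
  have hcmap : ∀ i, cmap i ∈ t ∧ xs (i * K) ∈ Metric.ball (cmap i) (ε₁ / 2) :=
    fun i => (hcov (xs (i * K))).choose_spec
  obtain ⟨a, ha, b, hb, hab, heqab⟩ := Finset.exists_ne_map_eq_of_card_lt_of_maps_to
    (s := Finset.range (t.card + 1)) (t := t) (by simp) (fun i _ => (hcmap i).1)
  obtain ⟨a', b', hlt, heq'⟩ : ∃ a' b' : ℕ, a' < b' ∧ cmap a' = cmap b' := by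
    rcases hab.lt_or_gt with h' | h'
    exacts [⟨a, b, h', heqab⟩, ⟨b, a, h', heqab.symm⟩]
  set n : ℕ := a' * K with hndef
  set mm : ℕ := b' * K with hmmdef
  have hKpos : 0 < K := by omega
  have hnm : n + K ≤ mm := by
    have h1 : (a' + 1) * K ≤ b' * K := Nat.mul_le_mul_right K (by omega)
    rw [add_mul, one_mul] at h1
    omega
  set k : ℕ := mm - n with hkdef
  have hkK : K ≤ k := by omega
  have hk1 : 0 < k := by omega
  have hnk : n + k = mm := by omega
  have hdist : dist (xs n) (xs mm) < ε₁ := by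
    have h1 := Metric.mem_ball.1 (hcmap a').2
    have h2 := Metric.mem_ball.1 (hcmap b').2
    rw [heq'] at h1
    calc dist (xs n) (xs mm) ≤ dist (xs n) (cmap b') + dist (cmap b') (xs mm) :=
          dist_triangle _ _ _
      _ < ε₁ / 2 + ε₁ / 2 := by
          rw [dist_comm (cmap b') (xs mm)]
          exact add_lt_add h1 h2
      _ = ε₁ := by ring
  -- the word along the block and its iterated map
  set w : ℕ → J := fun i => jsel (xs (n + i)) with hwdef
  let Ψ : ℕ → X → X := fun i => Nat.rec id (fun i Ψi => fun z => φ (w i) (Ψi z)) i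
  have hΨ0 : ∀ z, Ψ 0 z = z := fun z => rfl
  have hΨs : ∀ i z, Ψ (i + 1) z = φ (w i) (Ψ i z) := fun i z => rfl
  have hΨx : ∀ i, Ψ i (xs n) = xs (n + i) := by
    intro i
    induction i with
    | zero => simp [hΨ0]
    | succ i ih =>
      rw [hΨs, ih, hwdef]
      rw [show n + (i + 1) = (n + i) + 1 from rfl, hxs]
  have hΨlip : ∀ i, ∀ z z' : X, dist (Ψ i z) (Ψ i z') ≤ γ ^ i * dist z z' := by
    intro i
    induction i with
    | zero => intro z z'; simp [hΨ0]
    | succ i ih =>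
      intro z z'
      rw [hΨs, hΨs]
      calc dist (φ (w i) (Ψ i z)) (φ (w i) (Ψ i z')) ≤
            γ * (dist (w i) (w i) + dist (Ψ i z) (Ψ i z')) := hc _ _ _ _
        _ = γ * dist (Ψ i z) (Ψ i z') := by simp
        _ ≤ γ * (γ ^ i * dist z z') := mul_le_mul_of_nonneg_left (ih z z') hγ0.le
        _ = γ ^ (i + 1) * dist z z' := by ring
  -- fixed point of the block map
  set Kc : NNReal := (⟨γ, hγ0.le⟩ : NNReal) ^ k with hKcdef
  have hKc_coe : (Kc : ℝ) = γ ^ k := by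
    rw [hKcdef]; push_cast; rfl
  have hKclt : Kc < 1 := by
    rw [← NNReal.coe_lt_coe, hKc_coe, NNReal.coe_one]
    exact pow_lt_one₀ hγ0.le hγ1 hk1.ne'
  have hcontr : ContractingWith Kc (Ψ k) := by
    refine ⟨hKclt, LipschitzWith.of_dist_le_mul fun z z' => ?_⟩
    rw [hKc_coe]; exact hΨlip k z z'
  set p : X := ContractingWith.fixedPoint (Ψ k) hcontr with hpdef
  have hpfix : Ψ k p = p := hcontr.fixedPoint_isFixedPt
  have hγkγ : γ ^ k ≤ γ := pow_le_of_le_one hγ0.le hγ1.le hk1.ne'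
  have hdp : dist (xs n) p ≤ ε₁ / (1 - γ) := by
    have h1 := hcontr.dist_fixedPoint_le (xs n)
    rw [hΨx k, hnk] at h1
    rw [← hpdef] at h1
    refine h1.trans ?_
    rw [hKc_coe]
    apply div_le_div₀ hε₁.le hdist.le h1γ (by linarith)
  set q : ℕ → X := fun i => Ψ i p with hqdef
  have hq : ∀ i, q (i + 1) = φ (w i) (q i) := fun i => rfl
  have hper : q k = q 0 := hpfix
  have hqx : ∀ i, dist (q i) (xs (n + i)) ≤ ε₁ / (1 - γ) := by
    intro i
    calc dist (q i) (xs (n + i)) = dist (Ψ i p) (Ψ i (xs n)) := by rw [hΨx i]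
      _ ≤ γ ^ i * dist p (xs n) := hΨlip i p (xs n)
      _ ≤ 1 * dist p (xs n) :=
          mul_le_mul_of_nonneg_right (pow_le_one₀ hγ0.le hγ1.le) dist_nonneg
      _ = dist p (xs n) := one_mul _
      _ ≤ ε₁ / (1 - γ) := by rw [dist_comm]; exact hdp
  obtain ⟨π, hπhol, hπint⟩ := aux_periodic_holonomic φ hφc A hAc k hk1 w q hq hper
  refine ⟨π, hπhol, ?_⟩
  rw [hπint]
  -- arithmetic
  set S1 : ℝ := ∑ i ∈ Finset.range k, A (w i) (xs (n + i)) with hS1def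
  set S2 : ℝ := ∑ i ∈ Finset.range k, A (w i) (q i) with hS2def
  set c₀ : ℝ := L₀ * (ε₁ / (1 - γ)) with hc₀def
  have hS12 : S1 - (k : ℝ) * c₀ ≤ S2 := by
    have h1 : ∀ i ∈ Finset.range k, A (w i) (xs (n + i)) - c₀ ≤ A (w i) (q i) := by
      intro i _
      have h2 := hA₀ (w i) (w i) (xs (n + i)) (q i)
      simp only [dist_self, zero_add] at h2
      have h3 := (abs_le.1 h2).2
      have h4 : L₀ * dist (xs (n + i)) (q i) ≤ c₀ := by
        rw [hc₀def]
        apply mul_le_mul_of_nonneg_left _ hL₀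
        rw [dist_comm]; exact hqx i
      linarith
    have h5 := Finset.sum_le_sum h1
    rw [Finset.sum_sub_distrib, Finset.sum_const, Finset.card_range, nsmul_eq_mul] at h5
    exact h5
  have hSsum : (k : ℝ) * Real.log lam ≤ β * S1 + 2 * V := by
    have h1 := key2 n k
    have b1 := abs_le.1 (hV (xs (n + k)))
    have b2 := abs_le.1 (hV (xs n))
    rw [hS1def, hwdef]
    linarith [h1]
  have hV4 : 4 * V ≤ (k : ℝ) * β * η := by
    have h1 : (K' : ℝ) ≤ (k : ℝ) := by
      have : (K' : ℕ) ≤ k := by omega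
      exact_mod_cast this
    have h2 : 4 * V / (β * η) ≤ (k : ℝ) := le_trans hK' h1
    have h3 := (div_le_iff₀ (by positivity : (0:ℝ) < β * η)).1 h2
    linarith [h3]
  have hkpos : (0:ℝ) < (k : ℝ) := by exact_mod_cast hk1
  refine le_of_mul_le_mul_left ?_ (mul_pos hkpos hβ)
  have e1 : (k : ℝ) * β * (1 / β * Real.log lam) = (k : ℝ) * Real.log lam := by
    field_simp
  have e2 : (k : ℝ) * β * ((k : ℝ)⁻¹ * S2 + η) = β * S2 + (k : ℝ) * β * η := by
    field_simp
  rw [e1, e2]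
  have H1 : β * (S1 - (k : ℝ) * c₀) ≤ β * S2 := mul_le_mul_of_nonneg_left hS12 hβ.le
  have H2 : ((k : ℝ) * β) * c₀ ≤ ((k : ℝ) * β) * (η / 2) :=
    mul_le_mul_of_nonneg_left hcε₁ (mul_pos hkpos hβ).le
  nlinarith [H1, H2, hSsum, hV4]

lemma aux_lb (γ : ℝ) (hγ0 : 0 < γ) (hγ1 : γ < 1) (φ : J → X → X)
    (hc : ∀ j₁ j₂ : J, ∀ x₁ x₂ : X,
      dist (φ j₁ x₁) (φ j₂ x₂) ≤ γ * (dist j₁ j₂ + dist x₁ x₂))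
    (ν : Measure J) [IsProbabilityMeasure ν] [ν.IsOpenPosMeasure]
    (A : J → X → ℝ) (L₀ : ℝ) (hL₀ : 0 ≤ L₀)
    (hA₀ : ∀ j₁ j₂ : J, ∀ x₁ x₂ : X,
      |A j₁ x₁ - A j₂ x₂| ≤ L₀ * (dist j₁ j₂ + dist x₁ x₂))
    (β : ℝ) (hβ : 0 < β) (h : C(X, ℝ)) (lam : ℝ) (hlam : 0 < lam)
    (hpos : ∀ x, 0 < h x)
    (heig : ∀ x : X, (∫ j, Real.exp (β * A j x) * h (φ j x) ∂ν) = lam * h x)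
    (ε : ℝ) (hε : 0 < ε) (c : ℝ) (hc0 : 0 < c)
    (hcball : ∀ j : J, c ≤ (ν (Metric.ball j ε)).toReal)
    (π : Measure (J × X)) (hπ : Holonomic φ π) :
    β * (∫ p, A p.1 p.2 ∂π) ≤
      Real.log lam + β * (L₀ * ε / (1 - γ)) - Real.log c := by
  have h1γ : (0:ℝ) < 1 - γ := by linarith
  haveI := hπ.1
  have hφc : Continuous fun p : J × X => φ p.1 p.2 := aux_cont_pair hc
  have hAc : Continuous fun p : J × X => A p.1 p.2 :=
    aux_cont_pair (fun j₁ j₂ x₁ x₂ => by rw [Real.dist_eq]; exact hA₀ _ _ _ _)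
  have hφcx : ∀ x : X, Continuous fun j : J => φ j x := fun x =>
    hφc.comp (continuous_id.prodMk continuous_const)
  have hAcx : ∀ x : X, Continuous fun j : J => A j x := fun x =>
    hAc.comp (continuous_id.prodMk continuous_const)
  set v : X → ℝ := fun x => Real.log (h x) with hvdef
  have hvc : Continuous v := h.continuous.log fun z => (hpos z).ne'
  have hlip : ∀ x y : X, v x - v y ≤ β * L₀ / (1 - γ) * dist x y := by
    apply aux_log_lip γ hγ0 hγ1 φ hc ν (fun j x => β * A j x) (β * L₀)
      (by positivity)
      (fun j x₁ x₂ => by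
        have h1 := (abs_le.1 (hA₀ j j x₁ x₂)).2
        simp only [dist_self, zero_add] at h1
        have h2 : β * (A j x₁ - A j x₂) ≤ β * (L₀ * dist x₁ x₂) :=
          mul_le_mul_of_nonneg_left h1 hβ.le
        calc β * A j x₁ - β * A j x₂ = β * (A j x₁ - A j x₂) := by ring
          _ ≤ β * (L₀ * dist x₁ x₂) := h2
          _ = β * L₀ * dist x₁ x₂ := by ring)
      (fun x => continuous_const.mul (hAcx x)) hφcx h lam hlam hpos heig
  set Kl : ℝ := β * L₀ / (1 - γ) with hKldef
  have hKl0 : 0 ≤ Kl := by positivity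
  set C₀ : ℝ := Real.log lam + β * (L₀ * ε / (1 - γ)) - Real.log c with hC₀def
  have pointwise : ∀ p : J × X, β * A p.1 p.2 ≤ (v p.2 - v (φ p.1 p.2)) + C₀ := by
    rintro ⟨j, x⟩
    set b : ℝ := Real.exp (β * A j x + v (φ j x) - β * (L₀ * ε / (1 - γ))) with hbdef
    have hball : ∀ j' ∈ Metric.ball j ε, b ≤ Real.exp (β * A j' x) * h (φ j' x) := by
      intro j' hj'
      rw [Metric.mem_ball, dist_comm] at hj'
      have hA1 : A j x - A j' x ≤ L₀ * ε := by
        have h1 := (abs_le.1 (hA₀ j j' x x)).2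
        simp only [dist_self, add_zero] at h1
        have h2 : L₀ * dist j j' ≤ L₀ * ε := mul_le_mul_of_nonneg_left hj'.le hL₀
        linarith
      have hv1 : v (φ j x) - v (φ j' x) ≤ Kl * (γ * ε) := by
        have h3 : dist (φ j x) (φ j' x) ≤ γ * dist j j' := by
          have := hc j j' x x; simpa using this
        have h4 : dist (φ j x) (φ j' x) ≤ γ * ε :=
          h3.trans (mul_le_mul_of_nonneg_left hj'.le hγ0.le)
        calc v (φ j x) - v (φ j' x) ≤ Kl * dist (φ j x) (φ j' x) := hlip _ _
          _ ≤ Kl * (γ * ε) := mul_le_mul_of_nonneg_left h4 hKl0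
      have hid : β * (L₀ * ε) + Kl * (γ * ε) = β * (L₀ * ε / (1 - γ)) := by
        rw [hKldef]; field_simp; ring
      have hA2 : β * A j x - β * A j' x ≤ β * (L₀ * ε) := by
        have := mul_le_mul_of_nonneg_left hA1 hβ.le
        linarith [this]
      have hexp : β * A j x + v (φ j x) - β * (L₀ * ε / (1 - γ)) ≤
          β * A j' x + v (φ j' x) := by linarith
      calc b ≤ Real.exp (β * A j' x + v (φ j' x)) := Real.exp_le_exp.2 hexp
        _ = Real.exp (β * A j' x) * h (φ j' x) := by
            rw [Real.exp_add, hvdef, Real.exp_log (hpos _)]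
    have hfc : Continuous fun j' : J => Real.exp (β * A j' x) * h (φ j' x) :=
      (Real.continuous_exp.comp (continuous_const.mul (hAcx x))).mul
        (h.continuous.comp (hφcx x))
    have hfi := aux_integrable' hfc ν
    have hib : (ν (Metric.ball j ε)).toReal * b ≤ lam * h x := by
      rw [← heig x]
      calc (ν (Metric.ball j ε)).toReal * b = ∫ _ in Metric.ball j ε, b ∂ν := by
            rw [setIntegral_const, smul_eq_mul]; rfl
        _ ≤ ∫ j' in Metric.ball j ε, Real.exp (β * A j' x) * h (φ j' x) ∂ν :=
            setIntegral_mono_on (integrable_const b).integrableOn hfi.integrableOn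
              measurableSet_ball hball
        _ ≤ ∫ j', Real.exp (β * A j' x) * h (φ j' x) ∂ν :=
            setIntegral_le_integral hfi
              (Filter.Eventually.of_forall fun j' => (mul_pos (Real.exp_pos _) (hpos _)).le)
    have hcb : c * b ≤ lam * h x :=
      le_trans (mul_le_mul_of_nonneg_right (hcball j) (Real.exp_pos _).le) hib
    have hlog := (Real.log_le_log_iff (mul_pos hc0 (Real.exp_pos _))
      (mul_pos hlam (hpos x))).2 hcb
    rw [Real.log_mul hc0.ne' (Real.exp_ne_zero _), Real.log_exp,
      Real.log_mul hlam.ne' (hpos x).ne'] at hlog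
    rw [hC₀def]
    have hvx : Real.log (h x) = v x := rfl
    rw [hvx] at hlog
    linarith
  have hiA : Integrable (fun p : J × X => A p.1 p.2) π := aux_integrable' hAc π
  have hi2 : Integrable (fun p : J × X => v p.2) π :=
    aux_integrable' (hvc.comp continuous_snd) π
  have hi3 : Integrable (fun p : J × X => v (φ p.1 p.2)) π :=
    aux_integrable' (hvc.comp hφc) π
  have hi23 : Integrable (fun p : J × X => v p.2 - v (φ p.1 p.2)) π := hi2.sub hi3
  have hgint : Integrable (fun p : J × X => v p.2 - v (φ p.1 p.2) + C₀) π :=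
    hi23.add (integrable_const C₀)
  have hint := integral_mono (hiA.const_mul β) hgint pointwise
  rw [integral_const_mul, integral_add hi23 (integrable_const C₀),
    integral_sub hi2 hi3, integral_const] at hint
  have hhol := hπ.2 ⟨v, hvc⟩
  simp only [ContinuousMap.coe_mk] at hhol
  rw [hhol] at hint
  simp only [measure_univ, probReal_univ, ENNReal.toReal_one, one_smul, sub_self, zero_add] at hint
  rw [hC₀def] at hint
  exact hint

end Aux

theorem stmt5 {J X : Type*} [MetricSpace J] [MetricSpace X]
    [CompactSpace J] [CompactSpace X] [Nonempty J] [Nonempty X]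
    [MeasurableSpace J] [BorelSpace J] [MeasurableSpace X] [BorelSpace X]
    (ν : Measure J) [IsProbabilityMeasure ν] [ν.IsOpenPosMeasure]
    (γ : ℝ) (hγ0 : 0 < γ) (hγ1 : γ < 1)
    (φ : J → X → X)
    (hc : ∀ j₁ j₂ : J, ∀ x₁ x₂ : X,
      dist (φ j₁ x₁) (φ j₂ x₂) ≤ γ * (dist j₁ j₂ + dist x₁ x₂))
    (A : J → X → ℝ) (L : ℝ)
    (hA : ∀ j₁ j₂ : J, ∀ x₁ x₂ : X,
      |A j₁ x₁ - A j₂ x₂| ≤ L * (dist j₁ j₂ + dist x₁ x₂))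
    (h : ℝ → C(X, ℝ)) (lam : ℝ → ℝ)
    (hlam : ∀ β > (0 : ℝ), 0 < lam β)
    (hpos : ∀ β > (0 : ℝ), ∀ x : X, 0 < h β x)
    (hnorm : ∀ β > (0 : ℝ), (⨆ x : X, h β x) = 1)
    (heig : ∀ β > (0 : ℝ), ∀ x : X,
      (∫ j, Real.exp (β * A j x) * h β (φ j x) ∂ν) = lam β * h β x) :
    Tendsto (fun β : ℝ => (1 / β) * Real.log (lam β)) atTop
      (𝓝 (sSup {r : ℝ | ∃ π : Measure (J × X),
        Holonomic φ π ∧ r = ∫ p, A p.1 p.2 ∂π})) := by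
  classical
  have h1γ : (0:ℝ) < 1 - γ := by linarith
  set L₀ : ℝ := max L 0 with hL₀def
  have hL₀ : 0 ≤ L₀ := le_max_right _ _
  have hA₀ : ∀ j₁ j₂ : J, ∀ x₁ x₂ : X,
      |A j₁ x₁ - A j₂ x₂| ≤ L₀ * (dist j₁ j₂ + dist x₁ x₂) := by
    intro j₁ j₂ x₁ x₂
    refine (hA j₁ j₂ x₁ x₂).trans
      (mul_le_mul_of_nonneg_right (le_max_left _ _) (by positivity))
  set S : Set ℝ := {r : ℝ | ∃ π : Measure (J × X),
    Holonomic φ π ∧ r = ∫ p, A p.1 p.2 ∂π} with hSdef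
  have hφc : Continuous fun p : J × X => φ p.1 p.2 := aux_cont_pair hc
  have hAc : Continuous fun p : J × X => A p.1 p.2 :=
    aux_cont_pair (fun j₁ j₂ x₁ x₂ => by rw [Real.dist_eq]; exact hA₀ _ _ _ _)
  -- S is nonempty
  have hSne : S.Nonempty := by
    set j₀ : J := Classical.arbitrary J
    have hcontr : ContractingWith (⟨γ, hγ0.le⟩ : NNReal) (φ j₀) := by
      refine ⟨by exact_mod_cast hγ1, LipschitzWith.of_dist_le_mul fun z z' => ?_⟩
      have := hc j₀ j₀ z z'
      simp at this; exact this
    set p₀ : X := ContractingWith.fixedPoint (φ j₀) hcontr with hp₀def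
    have hp₀ : φ j₀ p₀ = p₀ := hcontr.fixedPoint_isFixedPt
    obtain ⟨π, hπ, hπint⟩ := aux_periodic_holonomic φ hφc A hAc 1 one_pos
      (fun _ => j₀) (fun _ => p₀) (fun i => hp₀.symm) rfl
    exact ⟨∫ p, A p.1 p.2 ∂π, π, hπ, rfl⟩
  -- S is bounded above
  obtain ⟨CA, hCA⟩ := aux_bound (Z := J × X) hAc
  have hSbdd : BddAbove S := by
    refine ⟨CA, fun r hr => ?_⟩
    obtain ⟨π, hπ, rfl⟩ := hr
    haveI := hπ.1
    have h1 : |∫ p, A p.1 p.2 ∂π| ≤ CA := by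
      calc |∫ p, A p.1 p.2 ∂π| ≤ ∫ p, |A p.1 p.2| ∂π := by
            simpa [Real.norm_eq_abs] using
              norm_integral_le_integral_norm (μ := π) (fun p : J × X => A p.1 p.2)
        _ ≤ ∫ _, CA ∂π :=
            integral_mono (aux_integrable' hAc π).abs (integrable_const _) fun p => hCA p
        _ = CA := by simp
    exact (abs_le.1 h1).2
  set m : ℝ := sSup S with hmdef
  -- upper bound : (1/β) log lam β ≤ m for all β > 0
  have hub : ∀ β : ℝ, 0 < β → (1 / β) * Real.log (lam β) ≤ m := by
    intro β hβ
    refine le_of_forall_pos_le_add fun η hη => ?_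
    obtain ⟨π, hπ, hle⟩ := aux_orbit γ hγ0 hγ1 φ hc ν A L₀ hL₀ hA₀ β hβ (h β) (lam β)
      (hlam β hβ) (hpos β hβ) (heig β hβ) η hη
    exact hle.trans (add_le_add_left (le_csSup hSbdd ⟨π, hπ, rfl⟩) η)
  -- the limit
  rw [Metric.tendsto_atTop]
  intro ε hε
  obtain ⟨r, hrS, hrm⟩ := exists_lt_of_lt_csSup hSne (show m - ε / 3 < m by linarith)
  set ε₂ : ℝ := ε * (1 - γ) / (3 * (L₀ + 1)) with hε₂def
  have hε₂ : 0 < ε₂ := div_pos (mul_pos hε h1γ) (by positivity)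
  obtain ⟨c, hc0, hcball⟩ := aux_ball ν hε₂
  have hEbound : L₀ * ε₂ / (1 - γ) ≤ ε / 3 := by
    have e : L₀ * ε₂ / (1 - γ) = L₀ * ε / (3 * (L₀ + 1)) := by
      rw [hε₂def]; field_simp
    rw [e, div_le_div_iff₀ (by positivity) (by norm_num)]
    nlinarith [hε.le, hL₀]
  obtain ⟨N₀, hN₀⟩ := exists_nat_ge (3 * (|Real.log c| + 1) / ε)
  refine ⟨max (N₀ : ℝ) 1, fun β hβ => ?_⟩
  have hβ1 : (1:ℝ) ≤ β := le_trans (le_max_right _ _) hβ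
  have hβ0 : (0:ℝ) < β := lt_of_lt_of_le one_pos hβ1
  have hβN : 3 * (|Real.log c| + 1) / ε ≤ β :=
    le_trans hN₀ (le_trans (le_max_left _ _) hβ)
  obtain ⟨π, hπ, hreq⟩ := hrS
  have hlow := aux_lb γ hγ0 hγ1 φ hc ν A L₀ hL₀ hA₀ β hβ0 (h β) (lam β) (hlam β hβ0)
    (hpos β hβ0) (heig β hβ0) ε₂ hε₂ c hc0 hcball π hπ
  rw [← hreq] at hlow
  -- hlow : β * r ≤ log (lam β) + β * (L₀ * ε₂ / (1 - γ)) - log c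
  have hlogc : |Real.log c| ≤ β * (ε / 3) := by
    have h1 := (div_le_iff₀ hε).1 hβN
    nlinarith [abs_nonneg (Real.log c)]
  have hkey : (m - ε) * β < Real.log (lam β) := by
    have h2 : β * (m - ε / 3) < β * r := mul_lt_mul_of_pos_left hrm hβ0
    have h3 : β * (L₀ * ε₂ / (1 - γ)) ≤ β * (ε / 3) :=
      mul_le_mul_of_nonneg_left hEbound hβ0.le
    nlinarith [neg_abs_le (Real.log c)]
  have hflow : m - ε < (1 / β) * Real.log (lam β) := by
    rw [one_div, inv_mul_eq_div, lt_div_iff₀ hβ0]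
    linarith [hkey]
  have hup := hub β hβ0
  rw [Real.dist_eq, abs_lt]
  refine ⟨by linarith, by linarith⟩
end

section
/- If π_∞ is a weak* limit of equilibrium probabilities π_{β_n A} as β_n → +∞, then π_∞ is holonomic and maximizing for A, i.e. ∫ A dπ_∞ = m(A). -/
open MeasureTheory Filter Topology

lemma contInner {J X : Type*} [MetricSpace J] [MetricSpace X]
    [CompactSpace J] [CompactSpace X] [MeasurableSpace J] [BorelSpace J]
    (ν : Measure J) [IsProbabilityMeasure ν] (F : C(J × X, ℝ)) :
    Continuous fun x => ∫ j, F (j, x) ∂ν := by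
  apply continuous_of_dominated (bound := fun _ => ‖F‖)
  · exact fun x => (F.continuous.comp (Continuous.prodMk_left x)).aestronglyMeasurable
  · exact fun x => Eventually.of_forall fun j => F.norm_coe_le_norm (j, x)
  · exact integrable_const _
  · exact Eventually.of_forall fun j => F.continuous.comp (Continuous.prodMk_right j)

lemma contInner' {J X : Type*} [MetricSpace J] [MetricSpace X]
    [CompactSpace J] [CompactSpace X] [MeasurableSpace J] [BorelSpace J]
    (ν : Measure J) [IsProbabilityMeasure ν] {F : J × X → ℝ} (hF : Continuous F) :
    Continuous fun x => ∫ j, F (j, x) ∂ν :=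
  contInner ν ⟨F, hF⟩

lemma cint {Z : Type*} [MetricSpace Z] [CompactSpace Z] [MeasurableSpace Z] [OpensMeasurableSpace Z]
    (μ : Measure Z) [IsFiniteMeasure μ] {f : Z → ℝ} (hf : Continuous f) : Integrable f μ :=
  hf.integrable_of_hasCompactSupport (HasCompactSupport.of_compactSpace f)

lemma ballLB {J : Type*} [MetricSpace J] [CompactSpace J] [Nonempty J]
    [MeasurableSpace J] [BorelSpace J]
    (ν : Measure J) [IsProbabilityMeasure ν] [ν.IsOpenPosMeasure]
    {δ : ℝ} (hδ : 0 < δ) : ∃ c > 0, ∀ j : J, c ≤ (ν (Metric.ball j δ)).toReal := by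
  obtain ⟨t, ht⟩ := IsCompact.elim_finite_subcover (isCompact_univ (X := J))
    (fun j : J => Metric.ball j (δ/2)) (fun j => Metric.isOpen_ball)
    (fun j _ => Set.mem_iUnion.2 ⟨j, Metric.mem_ball_self (by linarith)⟩)
  have htne : t.Nonempty := by
    rcases Finset.eq_empty_or_nonempty t with rfl | h
    · exfalso
      obtain ⟨j⟩ := ‹Nonempty J›
      simpa using ht (Set.mem_univ j)
    · exact h
  refine ⟨t.inf' htne (fun i => (ν (Metric.ball i (δ/2))).toReal), ?_, ?_⟩
  · apply Finset.lt_inf'_iff .. |>.2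
    intro i _
    have : 0 < ν (Metric.ball i (δ/2)) :=
      Metric.isOpen_ball.measure_pos ν ⟨i, Metric.mem_ball_self (by linarith)⟩
    exact ENNReal.toReal_pos this.ne' (measure_ne_top ν _)
  · intro j
    obtain ⟨i, hi, hji⟩ : ∃ i ∈ t, j ∈ Metric.ball i (δ/2) := by
      simpa using ht (Set.mem_univ j)
    have hsub : Metric.ball i (δ/2) ⊆ Metric.ball j δ := by
      intro z hz
      have := Metric.mem_ball.1 hz
      have := Metric.mem_ball.1 hji
      rw [Metric.mem_ball]
      calc dist z j ≤ dist z i + dist i j := dist_triangle _ _ _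
        _ < δ/2 + δ/2 := by rw [dist_comm i j] at *; linarith
        _ = δ := by ring
    calc t.inf' htne (fun i => (ν (Metric.ball i (δ/2))).toReal)
        ≤ (ν (Metric.ball i (δ/2))).toReal := Finset.inf'_le _ hi
      _ ≤ (ν (Metric.ball j δ)).toReal :=
          ENNReal.toReal_mono (measure_ne_top ν _) (measure_mono hsub)

lemma logLip {J X : Type*} [MetricSpace J] [MetricSpace X]
    [CompactSpace J] [CompactSpace X] [Nonempty J] [Nonempty X]
    [MeasurableSpace J] [BorelSpace J]
    (ν : Measure J) [IsProbabilityMeasure ν]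
    {γ : ℝ} (hγ0 : 0 < γ) (hγ1 : γ < 1)
    {φ : J → X → X}
    (hc : ∀ j₁ j₂ : J, ∀ x₁ x₂ : X,
      dist (φ j₁ x₁) (φ j₂ x₂) ≤ γ * (dist j₁ j₂ + dist x₁ x₂))
    {A : J → X → ℝ} {L' : ℝ} (hL' : 0 ≤ L')
    (hA : ∀ j₁ j₂ : J, ∀ x₁ x₂ : X,
      |A j₁ x₁ - A j₂ x₂| ≤ L' * (dist j₁ j₂ + dist x₁ x₂))
    {b : ℝ} (hb : 0 < b)
    (h : C(X, ℝ)) {lam : ℝ} (hlam : 0 < lam) (hpos : ∀ x, 0 < h x)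
    (heig : ∀ x : X, (∫ j, Real.exp (b * A j x) * h (φ j x) ∂ν) = lam * h x)
    (x y : X) : Real.log (h x) - Real.log (h y) ≤ (b * L' / (1 - γ)) * dist x y := by
  set u : X → ℝ := fun z => Real.log (h z) with hu
  have h1γ : 0 < 1 - γ := by linarith
  have hφj : ∀ z : X, Continuous fun j : J => φ j z := by
    intro z
    refine (LipschitzWith.of_dist_le_mul (K := ⟨γ, hγ0.le⟩) ?_).continuous
    intro j₁ j₂
    exact (by simpa using hc j₁ j₂ z z : dist (φ j₁ z) (φ j₂ z) ≤ γ * dist j₁ j₂)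
  have hAj : ∀ z : X, Continuous fun j : J => A j z := by
    intro z
    refine (LipschitzWith.of_dist_le_mul (K := ⟨L', hL'⟩) ?_).continuous
    intro j₁ j₂
    rw [Real.dist_eq]
    exact (by simpa using hA j₁ j₂ z z : |A j₁ z - A j₂ z| ≤ L' * dist j₁ j₂)
  have huc : Continuous u := h.continuous.log fun z => (hpos z).ne'
  have hfc : ∀ z : X, Continuous fun j : J => Real.exp (b * A j z) * h (φ j z) :=
    fun z => ((continuous_const.mul (hAj z)).rexp).mul (h.continuous.comp (hφj z))
  -- one step
  have onestep : ∀ x y : X, ∃ x' y' : X, dist x' y' ≤ γ * dist x y ∧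
      u x - u y ≤ b * L' * dist x y + (u x' - u y') := by
    intro x y
    have gc : Continuous fun j : J => u (φ j x) - u (φ j y) :=
      (huc.comp (hφj x)).sub (huc.comp (hφj y))
    obtain ⟨j₀, -, hj₀'⟩ := (isCompact_univ (X := J)).exists_isMaxOn Set.univ_nonempty
      gc.continuousOn
    have hj₀ : ∀ j : J, u (φ j x) - u (φ j y) ≤ u (φ j₀ x) - u (φ j₀ y) :=
      fun j => hj₀' (Set.mem_univ j)
    refine ⟨φ j₀ x, φ j₀ y, by simpa using hc j₀ j₀ x y, ?_⟩
    set c : ℝ := b * L' * dist x y + (u (φ j₀ x) - u (φ j₀ y)) with hcdef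
    have key : lam * h x ≤ Real.exp c * (lam * h y) := by
      rw [← heig x, ← heig y, ← integral_const_mul]
      refine integral_mono (cint ν (hfc x)) (cint ν (continuous_const.mul (hfc y))) ?_
      intro j
      have e1 : Real.exp (b * A j x) * h (φ j x)
          = Real.exp (b * A j x + u (φ j x)) := by
        rw [Real.exp_add, Real.exp_log (hpos _)]
      have e2 : Real.exp c * (Real.exp (b * A j y) * h (φ j y))
          = Real.exp (c + (b * A j y + u (φ j y))) := by
        simp only [hcdef, hu, Real.exp_add, Real.exp_log (hpos (φ j y))]
      simp only [e1, e2]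
      apply Real.exp_le_exp.2
      have hAd : A j x - A j y ≤ L' * dist x y := by
        have := (abs_le.1 (hA j j x y)).2
        simpa using this
      have hgd : u (φ j x) - u (φ j y) ≤ u (φ j₀ x) - u (φ j₀ y) :=
        hj₀ j
      have : b * A j x ≤ b * A j y + b * (L' * dist x y) := by
        nlinarith
      simp only [hcdef]
      nlinarith
    have key2 : h x ≤ Real.exp c * h y := by
      have := (mul_le_mul_iff_right₀ hlam).1 (by linarith [key] : lam * h x ≤ lam * (Real.exp c * h y))
      · exact this
    have : u x ≤ c + u y := by
      calc u x = Real.log (h x) := rfl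
        _ ≤ Real.log (Real.exp c * h y) := Real.log_le_log (hpos x) key2
        _ = c + u y := by rw [Real.log_mul (Real.exp_ne_zero c) (hpos y).ne', Real.log_exp]
    linarith
  -- iterate
  have iter : ∀ k : ℕ, ∀ x y : X, ∃ x' y' : X, dist x' y' ≤ γ ^ k * dist x y ∧
      u x - u y ≤ b * L' * ((∑ i ∈ Finset.range k, γ ^ i) * dist x y) + (u x' - u y') := by
    intro k
    induction k with
    | zero => exact fun x y => ⟨x, y, by simp, by simp⟩
    | succ k ih =>
      intro x y
      obtain ⟨x', y', hd, hb1⟩ := ih x y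
      obtain ⟨x'', y'', hd2, hb2⟩ := onestep x' y'
      have hbL : (0:ℝ) ≤ b * L' := by positivity
      have hγk : (0:ℝ) ≤ γ ^ k := pow_nonneg hγ0.le k
      refine ⟨x'', y'', ?_, ?_⟩
      · calc dist x'' y'' ≤ γ * dist x' y' := hd2
          _ ≤ γ * (γ ^ k * dist x y) := by nlinarith
          _ = γ ^ (k+1) * dist x y := by ring
      · have h3 : b * L' * dist x' y' ≤ b * L' * (γ ^ k * dist x y) := by nlinarith
        have expand : b * L' * ((∑ i ∈ Finset.range (k+1), γ ^ i) * dist x y)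
            = b * L' * ((∑ i ∈ Finset.range k, γ ^ i) * dist x y)
              + b * L' * (γ ^ k * dist x y) := by
          rw [Finset.sum_range_succ]; ring
        rw [expand]
        linarith
  -- conclude
  have main : ∀ ε > 0, u x - u y ≤ b * L' / (1 - γ) * dist x y + ε := by
    intro ε hε
    have hUC : UniformContinuous u := CompactSpace.uniformContinuous_of_continuous huc
    obtain ⟨δ, hδ, hδ'⟩ := Metric.uniformContinuous_iff.1 hUC ε hε
    obtain ⟨k, hk⟩ : ∃ k : ℕ, γ ^ k * dist x y < δ := by
      have h0 : Tendsto (fun k : ℕ => γ ^ k * dist x y) atTop (𝓝 (0 * dist x y)) :=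
        (tendsto_pow_atTop_nhds_zero_of_lt_one hγ0.le hγ1).mul_const _
      rw [zero_mul] at h0
      exact (h0.eventually_lt_const hδ).exists
    obtain ⟨x', y', hd, hbnd⟩ := iter k x y
    have hsum : (∑ i ∈ Finset.range k, γ ^ i) ≤ 1 / (1 - γ) := by
      have hgs := geom_sum_mul γ k
      rw [le_div_iff₀ h1γ]
      nlinarith [pow_nonneg hγ0.le k]
    have hud : u x' - u y' ≤ ε := by
      have h5 := hδ' (lt_of_le_of_lt hd hk)
      rw [Real.dist_eq] at h5
      have := (abs_lt.1 h5).2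
      linarith
    have hbL : (0:ℝ) ≤ b * L' := by positivity
    have h6 : b * L' * ((∑ i ∈ Finset.range k, γ ^ i) * dist x y)
        ≤ b * L' / (1 - γ) * dist x y := by
      have h2 : (∑ i ∈ Finset.range k, γ ^ i) * dist x y
          ≤ (1 / (1 - γ)) * dist x y :=
        mul_le_mul_of_nonneg_right hsum dist_nonneg
      calc b * L' * ((∑ i ∈ Finset.range k, γ ^ i) * dist x y)
          ≤ b * L' * ((1 / (1 - γ)) * dist x y) := by nlinarith
        _ = b * L' / (1 - γ) * dist x y := by ring
    linarith
  by_contra hcon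
  push_neg at hcon
  have := main ((u x - u y - b * L' / (1 - γ) * dist x y) / 2) (by simp only [hu]; linarith)
  simp only [hu] at *
  linarith

theorem stmt7 {J X : Type*} [MetricSpace J] [MetricSpace X]
    [CompactSpace J] [CompactSpace X] [Nonempty J] [Nonempty X]
    [MeasurableSpace J] [BorelSpace J] [MeasurableSpace X] [BorelSpace X]
    (ν : Measure J) [IsProbabilityMeasure ν] [ν.IsOpenPosMeasure]
    (γ : ℝ) (hγ0 : 0 < γ) (hγ1 : γ < 1)
    (φ : J → X → X)
    (hc : ∀ j₁ j₂ : J, ∀ x₁ x₂ : X,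
      dist (φ j₁ x₁) (φ j₂ x₂) ≤ γ * (dist j₁ j₂ + dist x₁ x₂))
    (A : J → X → ℝ) (L : ℝ)
    (hA : ∀ j₁ j₂ : J, ∀ x₁ x₂ : X,
      |A j₁ x₁ - A j₂ x₂| ≤ L * (dist j₁ j₂ + dist x₁ x₂))
    (β : ℕ → ℝ) (hβpos : ∀ n, 0 < β n) (hβ : Tendsto β atTop atTop)
    (h : ℕ → C(X, ℝ)) (lam : ℕ → ℝ)
    (hlam : ∀ n, 0 < lam n) (hpos : ∀ n, ∀ x : X, 0 < h n x)
    (heig : ∀ n, ∀ x : X,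
      (∫ j, Real.exp (β n * A j x) * h n (φ j x) ∂ν) = lam n * h n x)
    (ρ : ℕ → Measure X) (hρ : ∀ n, IsProbabilityMeasure (ρ n))
    (hρinv : ∀ n, ∀ f : C(X, ℝ),
      (∫ x, f x ∂ρ n) = ∫ x, ∫ j,
        (Real.exp (β n * A j x) * h n (φ j x) / (lam n * h n x)) *
          f (φ j x) ∂ν ∂ρ n)
    (π : ℕ → Measure (J × X)) (hπ : ∀ n, IsProbabilityMeasure (π n))
    (hπdef : ∀ n, ∀ g : C(J × X, ℝ),
      (∫ p, g p ∂π n) = ∫ x, ∫ j,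
        (Real.exp (β n * A j x) * h n (φ j x) / (lam n * h n x)) *
          g (j, x) ∂ν ∂ρ n)
    (πinf : Measure (J × X)) (hπinf : IsProbabilityMeasure πinf)
    (hweak : ∀ g : C(J × X, ℝ),
      Tendsto (fun n => ∫ p, g p ∂π n) atTop (𝓝 (∫ p, g p ∂πinf))) :
    Holonomic φ πinf ∧
      (∫ p, A p.1 p.2 ∂πinf) = sSup {r : ℝ | ∃ π' : Measure (J × X),
        Holonomic φ π' ∧ r = ∫ p, A p.1 p.2 ∂π'} := by
  classical
  -- Lipschitz constant nonneg version
  set L' : ℝ := max L 0 with hL'def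
  have hL0 : 0 ≤ L' := le_max_right _ _
  have hA' : ∀ j₁ j₂ : J, ∀ x₁ x₂ : X,
      |A j₁ x₁ - A j₂ x₂| ≤ L' * (dist j₁ j₂ + dist x₁ x₂) := by
    intro j₁ j₂ x₁ x₂
    refine (hA j₁ j₂ x₁ x₂).trans ?_
    have : (0:ℝ) ≤ dist j₁ j₂ + dist x₁ x₂ := by positivity
    exact mul_le_mul_of_nonneg_right (le_max_left _ _) this
  have h1γ : 0 < 1 - γ := by linarith
  -- continuity facts
  have hΦ : Continuous fun p : J × X => φ p.1 p.2 := by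
    refine (LipschitzWith.of_dist_le_mul (K := ⟨2*γ, by positivity⟩) ?_).continuous
    intro p q
    refine (hc p.1 q.1 p.2 q.2).trans ?_
    rw [Prod.dist_eq]
    show _ ≤ (2*γ) * _
    have h1 : dist p.1 q.1 ≤ max (dist p.1 q.1) (dist p.2 q.2) := le_max_left _ _
    have h2 : dist p.2 q.2 ≤ max (dist p.1 q.1) (dist p.2 q.2) := le_max_right _ _
    nlinarith
  have hAc : Continuous fun p : J × X => A p.1 p.2 := by
    refine (LipschitzWith.of_dist_le_mul (K := ⟨2*L', by positivity⟩) ?_).continuous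
    intro p q
    rw [Real.dist_eq, Prod.dist_eq]
    refine (hA' p.1 q.1 p.2 q.2).trans ?_
    show _ ≤ (2*L') * _
    have h1 : dist p.1 q.1 ≤ max (dist p.1 q.1) (dist p.2 q.2) := le_max_left _ _
    have h2 : dist p.2 q.2 ≤ max (dist p.1 q.1) (dist p.2 q.2) := le_max_right _ _
    nlinarith
  set Acont : C(J × X, ℝ) := ⟨fun p => A p.1 p.2, hAc⟩ with hAcont
  have hφj : ∀ z : X, Continuous fun j : J => φ j z := by
    intro z
    refine (LipschitzWith.of_dist_le_mul (K := ⟨γ, hγ0.le⟩) ?_).continuous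
    intro j₁ j₂
    exact (by simpa using hc j₁ j₂ z z : dist (φ j₁ z) (φ j₂ z) ≤ γ * dist j₁ j₂)
  have hAj : ∀ z : X, Continuous fun j : J => A j z := by
    intro z
    refine (LipschitzWith.of_dist_le_mul (K := ⟨L', hL0⟩) ?_).continuous
    intro j₁ j₂
    rw [Real.dist_eq]
    exact (by simpa using hA' j₁ j₂ z z : |A j₁ z - A j₂ z| ≤ L' * dist j₁ j₂)
  -- positivity of q and its continuity
  have hqpos : ∀ n : ℕ, ∀ j : J, ∀ x : X,
      0 < Real.exp (β n * A j x) * h n (φ j x) / (lam n * h n x) := by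
    intro n j x
    exact div_pos (mul_pos (Real.exp_pos _) (hpos n _)) (mul_pos (hlam n) (hpos n x))
  have hqc : ∀ n : ℕ, Continuous fun p : J × X =>
      Real.exp (β n * A p.1 p.2) * h n (φ p.1 p.2) / (lam n * h n p.2) := by
    intro n
    refine Continuous.div (((continuous_const.mul hAc).rexp).mul
      ((h n).continuous.comp hΦ)) (continuous_const.mul ((h n).continuous.comp continuous_snd))
      fun p => (mul_pos (hlam n) (hpos n p.2)).ne'
  -- q integrates to 1 in j
  have hint_q : ∀ n : ℕ, ∀ x : X,
      (∫ j, Real.exp (β n * A j x) * h n (φ j x) / (lam n * h n x) ∂ν) = 1 := by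
    intro n x
    have hne : (lam n * h n x) ≠ 0 := (mul_pos (hlam n) (hpos n x)).ne'
    have : (fun j => Real.exp (β n * A j x) * h n (φ j x) / (lam n * h n x))
        = fun j => (lam n * h n x)⁻¹ * (Real.exp (β n * A j x) * h n (φ j x)) := by
      funext j; rw [div_eq_inv_mul]
    rw [this, integral_const_mul, heig n x, inv_mul_cancel₀ hne]
  -- each π n transports to ρ n
  have hmarg : ∀ n : ℕ, ∀ g : C(X, ℝ), (∫ p, g p.2 ∂π n) = ∫ x, g x ∂ρ n := by
    intro n g
    have e0 := hπdef n (g.comp ⟨Prod.snd, continuous_snd⟩)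
    simp only [ContinuousMap.comp_apply, ContinuousMap.coe_mk] at e0
    rw [e0]
    have e1 : ∀ x : X, (∫ j, Real.exp (β n * A j x) * h n (φ j x) / (lam n * h n x)
        * g x ∂ν) = g x := by
      intro x; rw [integral_mul_const, hint_q n x, one_mul]
    simp only [e1]
  have hmarg2 : ∀ n : ℕ, ∀ g : C(X, ℝ), (∫ p, g (φ p.1 p.2) ∂π n) = ∫ x, g x ∂ρ n := by
    intro n g
    have e0 := hπdef n (g.comp ⟨fun p : J × X => φ p.1 p.2, hΦ⟩)
    simp only [ContinuousMap.comp_apply, ContinuousMap.coe_mk] at e0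
    rw [e0, ← hρinv n g]
  -- πinf is holonomic
  have holoinf : Holonomic φ πinf := by
    refine ⟨hπinf, fun g => ?_⟩
    have t1 := hweak (g.comp ⟨Prod.snd, continuous_snd⟩)
    have t2 := hweak (g.comp ⟨fun p : J × X => φ p.1 p.2, hΦ⟩)
    simp only [ContinuousMap.comp_apply, ContinuousMap.coe_mk] at t1 t2
    exact tendsto_nhds_unique (t1.congr fun n => ((hmarg n g).trans (hmarg2 n g).symm)) t2
  -- Lipschitz bound for log ∘ h n
  have hLip : ∀ n : ℕ, ∀ x y : X, Real.log (h n x) - Real.log (h n y)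
      ≤ (β n * L' / (1 - γ)) * dist x y :=
    fun n x y => logLip ν hγ0 hγ1 hc hL0 hA' (hβpos n) (h n) (hlam n) (hpos n) (heig n) x y
  -- lower bound: log lam n ≤ β n ∫ A dπ n
  have step3 : ∀ n : ℕ, Real.log (lam n) ≤ β n * ∫ p, A p.1 p.2 ∂π n := by
    intro n
    haveI := hρ n
    haveI := hπ n
    set un : X → ℝ := fun x => Real.log (h n x) with hun
    have hunc : Continuous un := (h n).continuous.log fun z => (hpos n z).ne'
    have hcF1 : Continuous fun p : J × X => Real.exp (β n * A p.1 p.2) * h n (φ p.1 p.2)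
        / (lam n * h n p.2) * (β n * A p.1 p.2) := (hqc n).mul (continuous_const.mul hAc)
    have hcF2 : Continuous fun p : J × X => Real.exp (β n * A p.1 p.2) * h n (φ p.1 p.2)
        / (lam n * h n p.2) * un (φ p.1 p.2) := (hqc n).mul (hunc.comp hΦ)
    have e0 := hπdef n Acont
    simp only [hAcont, ContinuousMap.coe_mk] at e0
    have e1 : β n * (∫ p, A p.1 p.2 ∂π n)
        = ∫ x, (∫ j, Real.exp (β n * A j x) * h n (φ j x) / (lam n * h n x)
            * (β n * A j x) ∂ν) ∂ρ n := by
      rw [e0, ← integral_const_mul]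
      refine integral_congr_ae (Eventually.of_forall fun x => ?_)
      show β n * ∫ j, Real.exp (β n * A j x) * h n (φ j x) / (lam n * h n x) * A j x ∂ν = _
      rw [← integral_const_mul]
      refine integral_congr_ae (Eventually.of_forall fun j => ?_)
      show β n * (Real.exp (β n * A j x) * h n (φ j x) / (lam n * h n x) * A j x) = _
      ring
    have key : ∀ x : X, Real.log (lam n) + un x
        - (∫ j, Real.exp (β n * A j x) * h n (φ j x) / (lam n * h n x) * un (φ j x) ∂ν)
        ≤ ∫ j, Real.exp (β n * A j x) * h n (φ j x) / (lam n * h n x)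
            * (β n * A j x) ∂ν := by
      intro x
      set q : J → ℝ := fun j => Real.exp (β n * A j x) * h n (φ j x) / (lam n * h n x)
        with hqdef
      have hqp : ∀ j, 0 < q j := fun j => hqpos n j x
      have hqcx : Continuous q :=
        (((continuous_const.mul (hAj x)).rexp).mul ((h n).continuous.comp (hφj x))).div
          continuous_const (fun _ => (mul_pos (hlam n) (hpos n x)).ne')
      have hunφ : Continuous fun j => un (φ j x) := hunc.comp (hφj x)
      have i1 : Integrable q ν := cint ν hqcx
      have i2 : Integrable (fun j => q j * un (φ j x)) ν := cint ν (hqcx.mul hunφ)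
      have i3 : Integrable (fun j => q j * (β n * A j x)) ν :=
        cint ν (hqcx.mul (continuous_const.mul (hAj x)))
      have hlogq : ∀ j, Real.log (q j)
          = β n * A j x + un (φ j x) - un x - Real.log (lam n) := by
        intro j
        simp only [hqdef, hun]
        rw [Real.log_div (mul_pos (Real.exp_pos _) (hpos n _)).ne'
            (mul_pos (hlam n) (hpos n x)).ne',
          Real.log_mul (Real.exp_ne_zero _) (hpos n _).ne',
          Real.log_mul (hlam n).ne' (hpos n x).ne', Real.log_exp]
        ring
      have hpt : ∀ j, q j * Real.log (lam n) + (q j - 1) + q j * un x - q j * un (φ j x)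
          ≤ q j * (β n * A j x) := by
        intro j
        have hj := hqp j
        have hg : q j - 1 ≤ q j * Real.log (q j) := by
          have h9 := Real.log_le_sub_one_of_pos (show 0 < (q j)⁻¹ by positivity)
          rw [Real.log_inv] at h9
          have h10 : q j * (-Real.log (q j)) ≤ q j * ((q j)⁻¹ - 1) :=
            mul_le_mul_of_nonneg_left h9 hj.le
          rw [mul_sub, mul_inv_cancel₀ hj.ne'] at h10
          nlinarith
        have h7 : q j * Real.log (q j) = q j * (β n * A j x) + q j * un (φ j x)
            - q j * un x - q j * Real.log (lam n) := by rw [hlogq j]; ring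
        linarith
      have icomb : Integrable (fun j => q j * Real.log (lam n) + (q j - 1) + q j * un x
          - q j * un (φ j x)) ν :=
        cint ν ((((hqcx.mul continuous_const).add (hqcx.sub continuous_const)).add
          (hqcx.mul continuous_const)).sub (hqcx.mul hunφ))
      have heq : (∫ j, (q j * Real.log (lam n) + (q j - 1) + q j * un x
            - q j * un (φ j x)) ∂ν)
          = Real.log (lam n) + un x - ∫ j, q j * un (φ j x) ∂ν := by
        have hrw : (fun j => q j * Real.log (lam n) + (q j - 1) + q j * un x
              - q j * un (φ j x))
            = fun j => (Real.log (lam n) + 1 + un x) * q j - 1 - q j * un (φ j x) := by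
          funext j; ring
        have hq1 : (∫ j, q j ∂ν) = 1 := hint_q n x
        have ia : Integrable (fun j => (Real.log (lam n) + 1 + un x) * q j - 1) ν :=
          (i1.const_mul _).sub (integrable_const 1)
        have ib : Integrable (fun j => (Real.log (lam n) + 1 + un x) * q j) ν :=
          i1.const_mul _
        rw [hrw, integral_sub ia i2, integral_sub ib (integrable_const 1),
          integral_const_mul, hq1]
        simp [measure_univ]
        ring
      calc Real.log (lam n) + un x - ∫ j, q j * un (φ j x) ∂ν
          = _ := heq.symm
        _ ≤ ∫ j, q j * (β n * A j x) ∂ν := integral_mono icomb i3 hpt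
    have iF1 : Integrable (fun x => ∫ j, Real.exp (β n * A j x) * h n (φ j x)
        / (lam n * h n x) * (β n * A j x) ∂ν) (ρ n) := cint (ρ n) (contInner' ν hcF1)
    have iF2 : Integrable (fun x => ∫ j, Real.exp (β n * A j x) * h n (φ j x)
        / (lam n * h n x) * un (φ j x) ∂ν) (ρ n) := cint (ρ n) (contInner' ν hcF2)
    have iun : Integrable un (ρ n) := cint (ρ n) hunc
    have e2 : (∫ x, (Real.log (lam n) + un x - ∫ j, Real.exp (β n * A j x) * h n (φ j x)
          / (lam n * h n x) * un (φ j x) ∂ν) ∂ρ n)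
        = Real.log (lam n) := by
      have ia : Integrable (fun x => Real.log (lam n) + un x) (ρ n) :=
        (integrable_const _).add iun
      rw [integral_sub ia iF2, integral_add (integrable_const _) iun, integral_const]
      have e3 := hρinv n ⟨un, hunc⟩
      simp only [ContinuousMap.coe_mk] at e3
      rw [← e3]
      simp [measure_univ]
    calc Real.log (lam n) = _ := e2.symm
      _ ≤ ∫ x, (∫ j, Real.exp (β n * A j x) * h n (φ j x) / (lam n * h n x)
            * (β n * A j x) ∂ν) ∂ρ n :=
        integral_mono (((integrable_const _).add iun).sub iF2) iF1 key
      _ = β n * ∫ p, A p.1 p.2 ∂π n := e1.symm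
  -- upper bound for any holonomic measure
  have step4 : ∀ π' : Measure (J × X), Holonomic φ π' →
      (∫ p, A p.1 p.2 ∂π') ≤ ∫ p, A p.1 p.2 ∂πinf := by
    intro π' hπ'
    haveI := hπ'.1
    have hAconv : Tendsto (fun n => ∫ p, A p.1 p.2 ∂π n) atTop
        (𝓝 (∫ p, A p.1 p.2 ∂πinf)) := by
      have := hweak Acont
      simpa only [hAcont, ContinuousMap.coe_mk] using this
    have main : ∀ δ > (0:ℝ), (∫ p, A p.1 p.2 ∂π')
        ≤ (∫ p, A p.1 p.2 ∂πinf) + (L' * δ + L' / (1 - γ) * (γ * δ)) := by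
      intro δ hδ
      obtain ⟨c, hc0, hcball⟩ := ballLB ν hδ
      have hpt : ∀ n : ℕ, ∀ j : J, ∀ x : X,
          β n * A j x + Real.log (h n (φ j x)) - Real.log (h n x)
          ≤ Real.log (lam n) - Real.log c
            + (β n * L' * δ + β n * L' / (1 - γ) * (γ * δ)) := by
        intro n j x
        set K : ℝ := β n * L' * δ + β n * L' / (1 - γ) * (γ * δ) with hK
        have hfcont : Continuous fun j' : J => Real.exp (β n * A j' x) * h n (φ j' x) :=
          ((continuous_const.mul (hAj x)).rexp).mul ((h n).continuous.comp (hφj x))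
        have hfint : Integrable (fun j' => Real.exp (β n * A j' x) * h n (φ j' x)) ν :=
          cint ν hfcont
        have hball_pt : ∀ j' ∈ Metric.ball j δ,
            Real.exp (β n * A j x + Real.log (h n (φ j x)) - K)
            ≤ Real.exp (β n * A j' x) * h n (φ j' x) := by
          intro j' hj'
          have hd : dist j j' ≤ δ := by
            rw [dist_comm]; exact (Metric.mem_ball.1 hj').le
          have hd0 : (0:ℝ) ≤ dist j j' := dist_nonneg
          have hbn := hβpos n
          have hA1 : A j x - A j' x ≤ L' * δ := by
            have h5 := (abs_le.1 (hA' j j' x x)).2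
            have h6 : L' * (dist j j' + dist x x) ≤ L' * δ := by
              simp only [dist_self, add_zero]
              exact mul_le_mul_of_nonneg_left hd hL0
            linarith
          have hdφ : dist (φ j x) (φ j' x) ≤ γ * δ := by
            have h5 := hc j j' x x
            simp only [dist_self, add_zero] at h5
            have h6 : γ * dist j j' ≤ γ * δ := mul_le_mul_of_nonneg_left hd hγ0.le
            linarith
          have hu1 : Real.log (h n (φ j x)) - Real.log (h n (φ j' x))
              ≤ β n * L' / (1 - γ) * (γ * δ) := by
            refine (hLip n _ _).trans ?_
            have hnn : (0:ℝ) ≤ β n * L' / (1 - γ) := by positivity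
            exact mul_le_mul_of_nonneg_left hdφ hnn
          have he : Real.exp (β n * A j' x) * h n (φ j' x)
              = Real.exp (β n * A j' x + Real.log (h n (φ j' x))) := by
            rw [Real.exp_add, Real.exp_log (hpos n _)]
          rw [he]
          apply Real.exp_le_exp.2
          have hA2 : β n * A j x - β n * A j' x ≤ β n * (L' * δ) := by nlinarith
          have hK' : K = β n * (L' * δ) + β n * L' / (1 - γ) * (γ * δ) := by
            rw [hK]; ring
          rw [hK']
          linarith [hA2, hu1]
        have hexp : c * Real.exp (β n * A j x + Real.log (h n (φ j x)) - K)
            ≤ lam n * h n x := by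
          calc c * Real.exp (β n * A j x + Real.log (h n (φ j x)) - K)
              ≤ (ν (Metric.ball j δ)).toReal
                * Real.exp (β n * A j x + Real.log (h n (φ j x)) - K) :=
              mul_le_mul_of_nonneg_right (hcball j) (Real.exp_pos _).le
            _ = ∫ _ in Metric.ball j δ,
                Real.exp (β n * A j x + Real.log (h n (φ j x)) - K) ∂ν := by
              rw [setIntegral_const, smul_eq_mul, measureReal_def]
            _ ≤ ∫ j' in Metric.ball j δ, Real.exp (β n * A j' x) * h n (φ j' x) ∂ν :=
              setIntegral_mono_on (integrable_const _).integrableOn hfint.integrableOn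
                Metric.isOpen_ball.measurableSet hball_pt
            _ ≤ ∫ j', Real.exp (β n * A j' x) * h n (φ j' x) ∂ν :=
              setIntegral_le_integral hfint (Eventually.of_forall fun j' => (mul_pos (Real.exp_pos _) (hpos n _)).le)
            _ = lam n * h n x := heig n x
        have h2 : Real.exp (β n * A j x + Real.log (h n (φ j x)) - K)
            ≤ lam n * h n x / c := by
          rw [le_div_iff₀ hc0]
          nlinarith [hexp]
        have h3 := Real.log_le_log (Real.exp_pos _) h2
        rw [Real.log_exp, Real.log_div (mul_pos (hlam n) (hpos n x)).ne' hc0.ne',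
          Real.log_mul (hlam n).ne' (hpos n x).ne'] at h3
        have hK' : K = β n * L' * δ + β n * L' / (1 - γ) * (γ * δ) := hK
        linarith [hK'.le, hK'.ge]
      have hseq : ∀ n : ℕ, (∫ p, A p.1 p.2 ∂π')
          ≤ (∫ p, A p.1 p.2 ∂π n) + (- Real.log c) / β n
            + (L' * δ + L' / (1 - γ) * (γ * δ)) := by
        intro n
        have hbn := hβpos n
        have hunc : Continuous fun x : X => Real.log (h n x) :=
          (h n).continuous.log fun z => (hpos n z).ne'
        have i1 : Integrable (fun p : J × X => β n * A p.1 p.2) π' :=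
          cint π' (continuous_const.mul hAc)
        have i2 : Integrable (fun p : J × X => Real.log (h n (φ p.1 p.2))) π' :=
          cint π' (hunc.comp hΦ)
        have i3 : Integrable (fun p : J × X => Real.log (h n p.2)) π' :=
          cint π' (hunc.comp continuous_snd)
        have hcancel := hπ'.2 ⟨fun x => Real.log (h n x), hunc⟩
        simp only [ContinuousMap.coe_mk] at hcancel
        have e4 : β n * (∫ p, A p.1 p.2 ∂π')
            = ∫ p, (β n * A p.1 p.2 + Real.log (h n (φ p.1 p.2))
                - Real.log (h n p.2)) ∂π' := by
          have ia : Integrable (fun p : J × X => β n * A p.1 p.2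
              + Real.log (h n (φ p.1 p.2))) π' := i1.add i2
          rw [integral_sub ia i3, integral_add i1 i2, integral_const_mul, ← hcancel]
          ring
        have e5 : β n * (∫ p, A p.1 p.2 ∂π')
            ≤ Real.log (lam n) - Real.log c
              + (β n * L' * δ + β n * L' / (1 - γ) * (γ * δ)) := by
          rw [e4]
          calc (∫ p, (β n * A p.1 p.2 + Real.log (h n (φ p.1 p.2))
                - Real.log (h n p.2)) ∂π')
              ≤ ∫ _p : J × X, (Real.log (lam n) - Real.log c
                + (β n * L' * δ + β n * L' / (1 - γ) * (γ * δ))) ∂π' :=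
              integral_mono ((i1.add i2).sub i3) (integrable_const _)
                (fun p => hpt n p.1 p.2)
            _ = Real.log (lam n) - Real.log c
                + (β n * L' * δ + β n * L' / (1 - γ) * (γ * δ)) := by
              simp [measure_univ]
        have h2 := step3 n
        have h3 : β n * (∫ p, A p.1 p.2 ∂π')
            ≤ β n * (∫ p, A p.1 p.2 ∂π n) + (- Real.log c)
              + β n * (L' * δ + L' / (1 - γ) * (γ * δ)) := by
          have hrng : β n * L' * δ + β n * L' / (1 - γ) * (γ * δ)
              = β n * (L' * δ + L' / (1 - γ) * (γ * δ)) := by ring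
          linarith [hrng.le, hrng.ge]
        have h4 : (∫ p, A p.1 p.2 ∂π') - (∫ p, A p.1 p.2 ∂π n)
            - (L' * δ + L' / (1 - γ) * (γ * δ)) ≤ (- Real.log c) / β n := by
          rw [le_div_iff₀ hbn]
          nlinarith [h3]
        linarith
      have hlim : Tendsto (fun n => (∫ p, A p.1 p.2 ∂π n) + (- Real.log c) / β n
          + (L' * δ + L' / (1 - γ) * (γ * δ))) atTop
          (𝓝 ((∫ p, A p.1 p.2 ∂πinf) + 0 + (L' * δ + L' / (1 - γ) * (γ * δ)))) :=
        (hAconv.add (Tendsto.div_atTop tendsto_const_nhds hβ)).add tendsto_const_nhds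
      have hfin := ge_of_tendsto' hlim hseq
      linarith
    by_contra hcon
    push_neg at hcon
    have hgap0 : (0:ℝ) < (∫ p, A p.1 p.2 ∂π') - (∫ p, A p.1 p.2 ∂πinf) := by linarith
    set gap : ℝ := (∫ p, A p.1 p.2 ∂π') - (∫ p, A p.1 p.2 ∂πinf) with hgap
    set M : ℝ := L' + L' / (1 - γ) * γ with hM
    have hM0 : (0:ℝ) ≤ M := by rw [hM]; positivity
    have hδ2 := main (gap / (2 * (M + 1))) (by positivity)
    have hrw : L' * (gap / (2 * (M + 1))) + L' / (1 - γ) * (γ * (gap / (2 * (M + 1))))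
        = M * (gap / (2 * (M + 1))) := by rw [hM]; ring
    rw [hrw] at hδ2
    have hle : M * (gap / (2 * (M + 1))) ≤ gap / 2 := by
      have h1 : M * (gap / (2 * (M + 1))) = gap * M / (2 * (M + 1)) := by ring
      rw [h1, div_le_div_iff₀ (by positivity) (by norm_num : (0:ℝ) < 2)]
      nlinarith [hgap0.le, hM0]
    linarith
  refine ⟨holoinf, ?_⟩
  have hmem : (∫ p, A p.1 p.2 ∂πinf) ∈ {r : ℝ | ∃ π' : Measure (J × X),
      Holonomic φ π' ∧ r = ∫ p, A p.1 p.2 ∂π'} := ⟨πinf, holoinf, rfl⟩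
  have hub : ∀ r ∈ {r : ℝ | ∃ π' : Measure (J × X),
      Holonomic φ π' ∧ r = ∫ p, A p.1 p.2 ∂π'}, r ≤ ∫ p, A p.1 p.2 ∂πinf := by
    rintro r ⟨π', h', rfl⟩
    exact step4 π' h'
  exact le_antisymm (le_csSup ⟨_, hub⟩ hmem) (csSup_le ⟨_, hmem⟩ hub)
end

section
/- If A: J×X → ℝ is Lipschitz and admits a continuous calibrated subaction V, then the Aubry set Ω_A is nonempty. Moreover V(x) = sup_{z ∈ Ω_A} [S_A(z,x) + V(z)] for every x ∈ X. -/
open MeasureTheory Filter Topology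

/-- `wordComp φ [j₁,…,jₙ] x = φ_{j₁} ∘ ⋯ ∘ φ_{jₙ} (x)`. -/
def wordComp {J X : Type*} (φ : J → X → X) : List J → X → X
  | [], x => x
  | j :: t, x => φ j (wordComp φ t x)

/-- `birkSum φ A m ω x = Σ_k A(j_k, φ_{(j_{k+1},…,j_n)}(x)) − n·m` for `ω = (j₁,…,jₙ)`. -/
def birkSum {J X : Type*} (φ : J → X → X) (A : J → X → ℝ) (m : ℝ) :
    List J → X → ℝ
  | [], _ => 0
  | j :: t, x => A j (wordComp φ t x) - m + birkSum φ A m t x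

/-- The Mañé potential `S_A(x,y)`, as an extended real number. -/
noncomputable def manePot {J X : Type*} [MetricSpace X] (φ : J → X → X)
    (A : J → X → ℝ) (m : ℝ) (x y : X) : EReal :=
  ⨅ (ε : ℝ) (_ : 0 < ε),
    sSup {s : EReal | ∃ ω : List J, ω ≠ [] ∧ dist x (wordComp φ ω y) < ε ∧
      s = ((birkSum φ A m ω y : ℝ) : EReal)}

/-- The Aubry set `Ω_A = {x : S_A(x,x) = 0}`. -/
noncomputable def aubry {J X : Type*} [MetricSpace X] (φ : J → X → X)
    (A : J → X → ℝ) (m : ℝ) : Set X :=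
  {x : X | manePot φ A m x x = 0}

set_option linter.unusedSectionVars false

section Aux

variable {J X : Type*} [MetricSpace X]

lemma dist_wordComp (φ : J → X → X) {γ : ℝ} (hγ0 : 0 ≤ γ)
    (hc : ∀ j (x₁ x₂ : X), dist (φ j x₁) (φ j x₂) ≤ γ * dist x₁ x₂) :
    ∀ (ω : List J) (a b : X),
      dist (wordComp φ ω a) (wordComp φ ω b) ≤ γ ^ ω.length * dist a b := by
  intro ω
  induction ω with
  | nil => intro a b; simp [wordComp]
  | cons j t ih =>
    intro a b
    calc dist (wordComp φ (j::t) a) (wordComp φ (j::t) b)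
        ≤ γ * dist (wordComp φ t a) (wordComp φ t b) := hc _ _ _
      _ ≤ γ * (γ ^ t.length * dist a b) := mul_le_mul_of_nonneg_left (ih a b) hγ0
      _ = γ ^ (j::t).length * dist a b := by rw [List.length_cons, pow_succ]; ring

lemma birkSum_lipschitz (φ : J → X → X) (A : J → X → ℝ) (m : ℝ)
    {γ L : ℝ} (hγ0 : 0 ≤ γ) (hγ1 : γ < 1) (hL : 0 ≤ L)
    (hc : ∀ j (x₁ x₂ : X), dist (φ j x₁) (φ j x₂) ≤ γ * dist x₁ x₂)
    (hA : ∀ j (x₁ x₂ : X), |A j x₁ - A j x₂| ≤ L * dist x₁ x₂) :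
    ∀ (ω : List J) (a b : X),
      |birkSum φ A m ω a - birkSum φ A m ω b| ≤ (L / (1 - γ)) * dist a b := by
  have h1γ : 0 < 1 - γ := by linarith
  have main : ∀ (ω : List J) (a b : X),
      |birkSum φ A m ω a - birkSum φ A m ω b|
        ≤ (L / (1 - γ)) * (1 - γ ^ ω.length) * dist a b := by
    intro ω
    induction ω with
    | nil => intro a b; simp [birkSum]
    | cons j t ih =>
      intro a b
      have e1 : birkSum φ A m (j::t) a - birkSum φ A m (j::t) b
          = (A j (wordComp φ t a) - A j (wordComp φ t b))
            + (birkSum φ A m t a - birkSum φ A m t b) := by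
        simp [birkSum]; ring
      have h2 : |A j (wordComp φ t a) - A j (wordComp φ t b)|
          ≤ L * (γ ^ t.length * dist a b) :=
        le_trans (hA _ _ _) (mul_le_mul_of_nonneg_left (dist_wordComp φ hγ0 hc t a b) hL)
      have h3 := ih a b
      have h4 : |birkSum φ A m (j::t) a - birkSum φ A m (j::t) b|
          ≤ L * (γ ^ t.length * dist a b)
            + (L / (1 - γ)) * (1 - γ ^ t.length) * dist a b := by
        rw [e1]; exact le_trans (abs_add_le _ _) (add_le_add h2 h3)
      refine le_trans h4 (le_of_eq ?_)
      rw [List.length_cons, pow_succ]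
      field_simp
      ring
  intro ω a b
  refine le_trans (main ω a b) ?_
  have hpow : 0 ≤ γ ^ ω.length := pow_nonneg hγ0 _
  have hCd : 0 ≤ (L / (1 - γ)) := div_nonneg hL h1γ.le
  nlinarith [mul_nonneg (mul_nonneg hCd hpow) (dist_nonneg (x := a) (y := b))]

lemma birkSum_le_V (φ : J → X → X) (A : J → X → ℝ) (m : ℝ) (V : X → ℝ)
    (hstep : ∀ j x, A j x + V (φ j x) - V x - m ≤ 0) :
    ∀ (ω : List J) (y : X), birkSum φ A m ω y ≤ V y - V (wordComp φ ω y) := by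
  intro ω
  induction ω with
  | nil => intro y; simp [birkSum, wordComp]
  | cons j t ih =>
    intro y
    have h1 := hstep j (wordComp φ t y)
    have h2 := ih y
    simp only [birkSum, wordComp]
    linarith

/-- the word of a calibrated orbit -/
def calWord {J X : Type*} (jf : X → J) (T : X → X) : ℕ → X → List J
  | 0, _ => []
  | (k+1), y => jf (T^[k] y) :: calWord jf T k y

lemma calWord_length (jf : X → J) (T : X → X) (k : ℕ) (y : X) :
    (calWord jf T k y).length = k := by
  induction k with
  | zero => rfl
  | succ k ih => simp [calWord, ih]

lemma calWord_wordComp (φ : J → X → X) (jf : X → J) (T : X → X)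
    (hT : ∀ x, T x = φ (jf x) x) (k : ℕ) (y : X) :
    wordComp φ (calWord jf T k y) y = T^[k] y := by
  induction k with
  | zero => rfl
  | succ k ih =>
    simp only [calWord, wordComp, ih, Function.iterate_succ_apply']
    rw [hT]

lemma calWord_birkSum (φ : J → X → X) (A : J → X → ℝ) (m : ℝ) (V : X → ℝ)
    (jf : X → J) (T : X → X) (hT : ∀ x, T x = φ (jf x) x)
    (heq : ∀ x, A (jf x) x + V (T x) - V x - m = 0) (k : ℕ) (y : X) :
    birkSum φ A m (calWord jf T k y) y = V y - V (T^[k] y) := by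
  induction k with
  | zero => simp [calWord, birkSum]
  | succ k ih =>
    have h1 := heq (T^[k] y)
    simp only [birkSum, calWord, calWord_wordComp φ jf T hT, ih,
      Function.iterate_succ_apply']
    linarith

lemma ereal_le_coe_of_forall_add {E : EReal} {c : ℝ}
    (h : ∀ δ : ℝ, 0 < δ → E ≤ ((c + δ : ℝ) : EReal)) : E ≤ (c : EReal) := by
  by_contra hcon
  push_neg at hcon
  obtain ⟨r, hr1, hr2⟩ := EReal.lt_iff_exists_real_btwn.mp hcon
  have hrc : c < r := by exact_mod_cast hr1
  have := h (r - c) (by linarith)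
  rw [show c + (r - c) = r by ring] at this
  exact absurd (lt_of_le_of_lt this hr2) (lt_irrefl _)

lemma coe_le_ereal_of_forall_sub {E : EReal} {c : ℝ}
    (h : ∀ δ : ℝ, 0 < δ → ((c - δ : ℝ) : EReal) ≤ E) : (c : EReal) ≤ E := by
  by_contra hcon
  push_neg at hcon
  obtain ⟨r, hr1, hr2⟩ := EReal.lt_iff_exists_real_btwn.mp hcon
  have hrc : r < c := by exact_mod_cast hr2
  have := h (c - r) (by linarith)
  rw [show c - (c - r) = r by ring] at this
  exact absurd (lt_of_lt_of_le hr1 this) (lt_irrefl _)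

end Aux


theorem stmt9 {J X : Type*} [MetricSpace J] [MetricSpace X]
    [CompactSpace J] [CompactSpace X] [Nonempty J] [Nonempty X]
    [MeasurableSpace J] [BorelSpace J] [MeasurableSpace X] [BorelSpace X]
    (γ : ℝ) (hγ0 : 0 < γ) (hγ1 : γ < 1)
    (φ : J → X → X)
    (hc : ∀ j₁ j₂ : J, ∀ x₁ x₂ : X,
      dist (φ j₁ x₁) (φ j₂ x₂) ≤ γ * (dist j₁ j₂ + dist x₁ x₂))
    (A : J → X → ℝ) (L : ℝ)
    (hA : ∀ j₁ j₂ : J, ∀ x₁ x₂ : X,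
      |A j₁ x₁ - A j₂ x₂| ≤ L * (dist j₁ j₂ + dist x₁ x₂))
    (mA : ℝ)
    (hmA : mA = sSup {r : ℝ | ∃ π : Measure (J × X),
      Holonomic φ π ∧ r = ∫ p, A p.1 p.2 ∂π})
    (V : X → ℝ) (hVcont : Continuous V)
    (hcal : ∀ x : X, (⨆ j : J, (A j x + V (φ j x) - V x - mA)) = 0) :
    (aubry φ A mA).Nonempty ∧
      ∀ x : X, ((V x : ℝ) : EReal) =
        ⨆ z ∈ aubry φ A mA, (manePot φ A mA z x + ((V z : ℝ) : EReal)) := by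
  clear hmA
  have hγ0' : (0:ℝ) ≤ γ := hγ0.le
  set L₀ := |L| with hL₀
  have hL₀0 : 0 ≤ L₀ := abs_nonneg L
  have hA' : ∀ j (a b : X), |A j a - A j b| ≤ L₀ * dist a b := by
    intro j a b
    have h := hA j j a b
    rw [dist_self, zero_add] at h
    exact h.trans (mul_le_mul_of_nonneg_right (le_abs_self L) dist_nonneg)
  have hc' : ∀ j (a b : X), dist (φ j a) (φ j b) ≤ γ * dist a b := by
    intro j a b
    have h := hc j j a b; rw [dist_self, zero_add] at h; exact h
  set C := L₀ / (1 - γ) with hCdef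
  have hC0 : 0 ≤ C := div_nonneg hL₀0 (by linarith)
  have hφj : ∀ x : X, Continuous fun j : J => φ j x := by
    intro x
    apply (LipschitzWith.of_dist_le_mul (K := γ.toNNReal) ?_).continuous
    intro j₁ j₂
    have h := hc j₁ j₂ x x
    rw [dist_self] at h
    rw [Real.coe_toNNReal γ hγ0']
    linarith
  have hAj : ∀ x : X, Continuous fun j : J => A j x := by
    intro x
    apply (LipschitzWith.of_dist_le_mul (K := L₀.toNNReal) ?_).continuous
    intro j₁ j₂
    have h := hA j₁ j₂ x x
    rw [dist_self, add_zero] at h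
    rw [Real.dist_eq, Real.coe_toNNReal _ hL₀0]
    exact h.trans (mul_le_mul_of_nonneg_right (le_abs_self L) dist_nonneg)
  have hfcont : ∀ x : X, Continuous fun j : J => A j x + V (φ j x) - V x - mA :=
    fun x => (((hAj x).add (hVcont.comp (hφj x))).sub continuous_const).sub continuous_const
  have hbdd : ∀ x : X, BddAbove (Set.range fun j : J => A j x + V (φ j x) - V x - mA) :=
    fun x => (isCompact_range (hfcont x)).bddAbove
  have hstep : ∀ j x, A j x + V (φ j x) - V x - mA ≤ 0 := by
    intro j x
    have h := le_ciSup (hbdd x) j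
    rw [hcal x] at h
    exact h
  have hsel : ∀ x : X, ∃ j : J, A j x + V (φ j x) - V x - mA = 0 := by
    intro x
    obtain ⟨j₀, -, hj₀⟩ := isCompact_univ.exists_isMaxOn Set.univ_nonempty
      (hfcont x).continuousOn
    refine ⟨j₀, le_antisymm (hstep j₀ x) ?_⟩
    have h : (⨆ j : J, (A j x + V (φ j x) - V x - mA)) ≤ A j₀ x + V (φ j₀ x) - V x - mA :=
      ciSup_le fun j => hj₀ (Set.mem_univ j)
    rw [hcal x] at h
    exact h
  set jf : X → J := fun x => (hsel x).choose with hjf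
  set T : X → X := fun x => φ (jf x) x with hTdef
  have hT : ∀ x, T x = φ (jf x) x := fun _ => rfl
  have heq : ∀ x, A (jf x) x + V (T x) - V x - mA = 0 := fun x => (hsel x).choose_spec
  have hVuc : ∀ δ : ℝ, 0 < δ → ∃ ε > 0, ∀ a b : X, dist a b < ε → |V a - V b| < δ := by
    intro δ hδ
    obtain ⟨ε, hε, h⟩ := Metric.uniformContinuous_iff.mp
      (CompactSpace.uniformContinuous_of_continuous hVcont) δ hδ
    exact ⟨ε, hε, fun a b hab => by rw [← Real.dist_eq]; exact h hab⟩
  have hUB : ∀ z y : X, manePot φ A mA z y ≤ ((V y - V z : ℝ) : EReal) := by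
    intro z y
    apply ereal_le_coe_of_forall_add
    intro δ hδ
    obtain ⟨ε, hε, hmod⟩ := hVuc δ hδ
    refine le_trans (iInf₂_le ε hε) (sSup_le ?_)
    rintro s ⟨ω, hω, hdist, rfl⟩
    rw [EReal.coe_le_coe_iff]
    have h1 := birkSum_le_V φ A mA V hstep ω y
    have h2 := abs_lt.mp (hmod z (wordComp φ ω y) hdist)
    linarith [h2.1, h2.2]
  have key : ∀ y : X, ∃ z : X, z ∈ aubry φ A mA ∧
      ((V y - V z : ℝ) : EReal) ≤ manePot φ A mA z y := by
    intro y
    obtain ⟨z, σ, hσ, hlim⟩ := CompactSpace.tendsto_subseq (fun n => T^[n] y)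
    have hlim' : ∀ ρ : ℝ, 0 < ρ → ∃ N, ∀ n ≥ N, dist (T^[σ n] y) z < ρ := by
      intro ρ hρ
      obtain ⟨N, hN⟩ := (Metric.tendsto_atTop.mp hlim) ρ hρ
      exact ⟨N, fun n hn => hN n hn⟩
    refine ⟨z, ?_, ?_⟩
    · -- z ∈ aubry
      have hge : ((0:ℝ) : EReal) ≤ manePot φ A mA z z := by
        refine le_iInf₂ fun ε hε => ?_
        apply coe_le_ereal_of_forall_sub
        intro δ hδ
        obtain ⟨ε₁, hε₁, hmod⟩ := hVuc (δ/3) (by linarith)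
        set ρ := min (ε/2) (min ε₁ (δ/(3*(C+1)))) with hρdef
        have hρ : 0 < ρ := by
          apply lt_min (by linarith)
          apply lt_min hε₁
          positivity
        have hρε : ρ ≤ ε/2 := min_le_left _ _
        have hρε₁ : ρ ≤ ε₁ := le_trans (min_le_right _ _) (min_le_left _ _)
        have hρδ : ρ ≤ δ/(3*(C+1)) := le_trans (min_le_right _ _) (min_le_right _ _)
        obtain ⟨N, hN⟩ := hlim' ρ hρ
        set mm := σ N with hmm
        set MM := σ (N+1) with hMM
        have hmMlt : mm < MM := hσ (Nat.lt_succ_self N)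
        have hdm : dist (T^[mm] y) z < ρ := hN N le_rfl
        have hdM : dist (T^[MM] y) z < ρ := hN (N+1) (Nat.le_succ N)
        set k := MM - mm with hk
        have hkm : k + mm = MM := by omega
        set ω := calWord jf T k (T^[mm] y) with hω
        have hlen : ω.length = k := calWord_length jf T k (T^[mm] y)
        have hωne : ω ≠ [] := by
          intro h
          rw [h] at hlen
          simp at hlen
          omega
        have hwc : wordComp φ ω (T^[mm] y) = T^[MM] y := by
          rw [hω, calWord_wordComp φ jf T hT, ← Function.iterate_add_apply, hkm]
        have hbs : birkSum φ A mA ω (T^[mm] y) = V (T^[mm] y) - V (T^[MM] y) := by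
          rw [hω, calWord_birkSum φ A mA V jf T hT heq, ← Function.iterate_add_apply, hkm]
        have hdist2 : dist z (wordComp φ ω z) < ε := by
          have h1 : dist (wordComp φ ω (T^[mm] y)) (wordComp φ ω z)
              ≤ γ ^ ω.length * dist (T^[mm] y) z := dist_wordComp φ hγ0' hc' ω _ _
          have h2 : γ ^ ω.length * dist (T^[mm] y) z ≤ dist (T^[mm] y) z :=
            mul_le_of_le_one_left dist_nonneg (pow_le_one₀ hγ0' hγ1.le)
          have h3 := dist_triangle z (T^[MM] y) (wordComp φ ω z)
          rw [hwc] at h1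
          have h4 := dist_comm z (T^[MM] y)
          linarith [dist_nonneg (x := T^[mm] y) (y := z)]
        have hbl := birkSum_lipschitz φ A mA hγ0' hγ1 hL₀0 hc' hA' ω z (T^[mm] y)
        have hbl' := abs_le.mp hbl
        have hCd : C * dist z (T^[mm] y) ≤ δ/3 := by
          rw [dist_comm]
          have h5 : C * dist (T^[mm] y) z ≤ C * ρ :=
            mul_le_mul_of_nonneg_left hdm.le hC0
          have h6 : C * ρ ≤ C * (δ/(3*(C+1))) := mul_le_mul_of_nonneg_left hρδ hC0
          have h7 : C * (δ/(3*(C+1))) ≤ δ/3 := by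
            rw [show C * (δ/(3*(C+1))) = (C*δ)/(3*(C+1)) by ring,
              div_le_div_iff₀ (by positivity) (by norm_num)]
            nlinarith
          linarith
        have hm1 := abs_lt.mp (hmod (T^[mm] y) z (by linarith))
        have hm2 := abs_lt.mp (hmod (T^[MM] y) z (by linarith))
        have hbz : (0:ℝ) - δ ≤ birkSum φ A mA ω z := by
          rw [hbs] at hbl'
          linarith [hbl'.1, hbl'.2, hm1.1, hm1.2, hm2.1, hm2.2]
        refine le_trans (EReal.coe_le_coe_iff.mpr hbz) (le_sSup ?_)
        exact ⟨ω, hωne, hdist2, rfl⟩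
      have hle : manePot φ A mA z z ≤ ((0:ℝ) : EReal) := by
        have h := hUB z z
        simpa using h
      have : manePot φ A mA z z = 0 := by
        refine le_antisymm ?_ ?_
        · simpa using hle
        · simpa using hge
      exact this
    · -- V y - V z ≤ manePot z y
      refine le_iInf₂ fun ε hε => ?_
      apply coe_le_ereal_of_forall_sub
      intro δ hδ
      obtain ⟨ε₁, hε₁, hmod⟩ := hVuc δ hδ
      obtain ⟨N, hN⟩ := hlim' (min ε ε₁) (lt_min hε hε₁)
      set M := σ (max N 1) with hM
      have hM1 : 1 ≤ M := le_trans (le_max_right N 1) hσ.le_apply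
      have hdM : dist (T^[M] y) z < min ε ε₁ := hN (max N 1) (le_max_left _ _)
      set ω := calWord jf T M y with hω
      have hlen : ω.length = M := calWord_length jf T M y
      have hωne : ω ≠ [] := by
        intro h
        rw [h] at hlen
        simp at hlen
        omega
      have hwc : wordComp φ ω y = T^[M] y := calWord_wordComp φ jf T hT M y
      have hbs : birkSum φ A mA ω y = V y - V (T^[M] y) :=
        calWord_birkSum φ A mA V jf T hT heq M y
      have hdist2 : dist z (wordComp φ ω y) < ε := by
        rw [hwc, dist_comm]
        exact lt_of_lt_of_le hdM (min_le_left _ _)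
      have hm1 := abs_lt.mp (hmod (T^[M] y) z (lt_of_lt_of_le hdM (min_le_right _ _)))
      have hbz : (V y - V z) - δ ≤ birkSum φ A mA ω y := by
        rw [hbs]
        linarith [hm1.1, hm1.2]
      refine le_trans (EReal.coe_le_coe_iff.mpr hbz) (le_sSup ?_)
      exact ⟨ω, hωne, hdist2, rfl⟩
  constructor
  · obtain ⟨z, hz, -⟩ := key (Classical.arbitrary X)
    exact ⟨z, hz⟩
  · intro x
    apply le_antisymm
    · obtain ⟨z, hz, hge⟩ := key x
      refine le_trans ?_
        (le_iSup₂ (f := fun z _ => manePot φ A mA z x + ((V z : ℝ) : EReal)) z hz)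
      calc ((V x : ℝ) : EReal) = ((V x - V z + V z : ℝ) : EReal) := by congr 1; ring
        _ = ((V x - V z : ℝ) : EReal) + ((V z : ℝ) : EReal) := EReal.coe_add _ _
        _ ≤ manePot φ A mA z x + ((V z : ℝ) : EReal) := add_le_add hge le_rfl
    · refine iSup₂_le fun z hz => ?_
      calc manePot φ A mA z x + ((V z : ℝ) : EReal)
          ≤ ((V x - V z : ℝ) : EReal) + ((V z : ℝ) : EReal) := add_le_add (hUB z x) le_rfl
        _ = ((V x : ℝ) : EReal) := by rw [← EReal.coe_add]; congr 1; ring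
end

section
/- A functional μ: C(X,ℝ) → ℝ satisfying μ(a+f) = a+μ(f) for all a∈ℝ, μ(max(f,g)) = max(μ(f),μ(g)), and μ(0)=0 (an idempotent probability) admits a representation μ(ψ) = sup_{x∈X} (λ(x) + ψ(x)) for a unique upper semicontinuous function λ: X → ℝ∪{−∞} with sup_{x∈X} λ(x) = 0; conversely, any such λ yields an idempotent probability by this formula. -/
open Filter Topology

noncomputable def erealAddIso (a : ℝ) : EReal ≃o EReal where
  toFun x := x + a
  invFun x := x - a
  left_inv x := EReal.add_sub_cancel_right
  right_inv x := EReal.sub_add_cancel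
  map_rel_iff' := by
    intro x y
    constructor
    · intro h
      have := add_le_add_left h (-(a:EReal))
      simpa [← sub_eq_add_neg, EReal.add_sub_cancel_right] using this
    · intro h; exact add_le_add_left h _

lemma ereal_add_iSup {ι : Sort*} [Nonempty ι] (a : ℝ) (f : ι → EReal) :
    (⨆ i, f i) + (a : EReal) = ⨆ i, (f i + a) :=
  (erealAddIso a).map_iSup f

lemma ereal_add_sup (a b c : EReal) : a + (b ⊔ c) = (a + b) ⊔ (a + c) := by
  rcases le_total b c with h | h
  · rw [sup_eq_right.2 h, sup_eq_right.2 (by exact add_le_add_right h a)]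
  · rw [sup_eq_left.2 h, sup_eq_left.2 (by exact add_le_add_right h a)]

theorem stmt11 {X : Type*} [MetricSpace X] [CompactSpace X] [Nonempty X] :
    (∀ μ : C(X, ℝ) → ℝ,
      (∀ (a : ℝ) (f : C(X, ℝ)), μ (ContinuousMap.const X a + f) = a + μ f) →
      (∀ f g : C(X, ℝ), μ (f ⊔ g) = max (μ f) (μ g)) →
      μ 0 = 0 →
      ∃! lam : X → EReal, UpperSemicontinuous lam ∧ (⨆ x : X, lam x) = 0 ∧
        ∀ ψ : C(X, ℝ), ((μ ψ : ℝ) : EReal) =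
          ⨆ x : X, lam x + ((ψ x : ℝ) : EReal)) ∧
    (∀ lam : X → EReal, UpperSemicontinuous lam → (⨆ x : X, lam x) = 0 →
      ∃ μ : C(X, ℝ) → ℝ,
        (∀ (a : ℝ) (f : C(X, ℝ)), μ (ContinuousMap.const X a + f) = a + μ f) ∧
        (∀ f g : C(X, ℝ), μ (f ⊔ g) = max (μ f) (μ g)) ∧
        μ 0 = 0 ∧
        ∀ ψ : C(X, ℝ), ((μ ψ : ℝ) : EReal) =
          ⨆ x : X, lam x + ((ψ x : ℝ) : EReal)) := by
  constructor
  · -- direct part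
    intro μ h1 h2 h3
    -- basic properties of μ
    have mono : ∀ f g : C(X, ℝ), f ≤ g → μ f ≤ μ g := by
      intro f g h
      have e := h2 f g
      rw [sup_eq_right.2 h] at e
      exact (le_max_left _ _).trans e.ge
    -- the candidate lam
    set lam : X → EReal := fun x => ⨅ ψ : C(X, ℝ), ((μ ψ - ψ x : ℝ) : EReal) with hlam
    have husc : UpperSemicontinuous lam := by
      apply upperSemicontinuous_iInf
      intro ψ
      exact (continuous_coe_real_ereal.comp (continuous_const.sub ψ.continuous)).upperSemicontinuous
    -- the representation
    have hrep : ∀ ψ : C(X, ℝ), ((μ ψ : ℝ) : EReal) = ⨆ x : X, lam x + ((ψ x : ℝ) : EReal) := by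
      intro ψ
      apply le_antisymm
      · -- hard direction
        by_contra hlt
        push_neg at hlt
        obtain ⟨r, hr1, hr2⟩ := EReal.exists_between_coe_real hlt
        rw [EReal.coe_lt_coe_iff] at hr2
        -- for each x there is φ with μ φ - φ x < r - ψ x
        have key : ∀ x : X, ∃ φ : C(X, ℝ), μ φ - φ x < r - ψ x := by
          intro x
          have h4 : lam x + ((ψ x : ℝ) : EReal) < (r : EReal) :=
            lt_of_le_of_lt (le_iSup (fun x => lam x + ((ψ x : ℝ) : EReal)) x) hr1
          have h5 : lam x < ((r - ψ x : ℝ) : EReal) := by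
            rw [EReal.coe_sub]
            rw [EReal.lt_sub_iff_add_lt (Or.inl (EReal.coe_ne_bot _))
              (Or.inl (EReal.coe_ne_top _))]
            exact h4
          rw [hlam] at h5
          obtain ⟨φ, hφ⟩ := iInf_lt_iff.1 h5
          exact ⟨φ, by exact_mod_cast hφ⟩
        -- compactness: finite subcover
        set U : C(X, ℝ) → Set X := fun φ => {y | μ φ - φ y < r - ψ y} with hU
        have hUopen : ∀ φ, IsOpen (U φ) :=
          fun φ => isOpen_lt (continuous_const.sub φ.continuous)
            (continuous_const.sub ψ.continuous)
        have hcover : (Set.univ : Set X) ⊆ ⋃ φ, U φ := by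
          intro x _
          obtain ⟨φ, hφ⟩ := key x
          exact Set.mem_iUnion.2 ⟨φ, hφ⟩
        obtain ⟨t, ht⟩ := isCompact_univ.elim_finite_subcover U hUopen hcover
        have htne : t.Nonempty := by
          obtain ⟨x⟩ := (inferInstance : Nonempty X)
          obtain ⟨φ, hφt, _⟩ := Set.mem_iUnion₂.1 (ht (Set.mem_univ x))
          exact ⟨φ, hφt⟩
        set G : C(X, ℝ) := t.sup' htne (fun φ => ContinuousMap.const X (-(μ φ)) + φ) with hG
        have hμG : μ G = 0 := by
          rw [hG, Finset.comp_sup'_eq_sup'_comp htne μ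
            (fun f g => h2 f g)]
          have : ∀ φ ∈ t, μ (ContinuousMap.const X (-(μ φ)) + φ) = 0 := by
            intro φ _
            rw [h1]; ring
          calc t.sup' htne (μ ∘ fun φ => ContinuousMap.const X (-(μ φ)) + φ)
              = t.sup' htne (fun _ => (0 : ℝ)) := Finset.sup'_congr htne rfl this
            _ = 0 := Finset.sup'_const htne 0
        have hle : ψ ≤ ContinuousMap.const X r + G := by
          rw [ContinuousMap.le_def]
          intro y
          obtain ⟨φ, hφt, hφ⟩ := Set.mem_iUnion₂.1 (ht (Set.mem_univ y))
          have h6 : -(μ φ) + φ y ≤ G y := by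
            rw [hG, ContinuousMap.sup'_apply]
            exact Finset.le_sup' (f := fun φ => (ContinuousMap.const X (-(μ φ)) + φ) y) hφt
          have h7 : μ φ - φ y < r - ψ y := hφ
          simp only [ContinuousMap.add_apply, ContinuousMap.const_apply]
          linarith
        have h8 : μ ψ ≤ r := by
          have := mono _ _ hle
          rw [h1] at this
          rw [hμG] at this
          linarith
        linarith
      · apply iSup_le
        intro x
        have h5 : lam x ≤ ((μ ψ - ψ x : ℝ) : EReal) := iInf_le _ ψ
        calc lam x + ((ψ x : ℝ) : EReal)
            ≤ ((μ ψ - ψ x : ℝ) : EReal) + ((ψ x : ℝ) : EReal) :=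
              add_le_add_left h5 _
          _ = ((μ ψ : ℝ) : EReal) := by
              rw [EReal.coe_sub]; exact EReal.sub_add_cancel
    have hlam_le0 : ∀ x, lam x ≤ 0 := by
      intro x
      have : lam x ≤ ((μ 0 - (0 : C(X, ℝ)) x : ℝ) : EReal) := iInf_le _ 0
      simpa [h3] using this
    have hsup0 : (⨆ x : X, lam x) = 0 := by
      have := hrep 0
      simp only [ContinuousMap.zero_apply, EReal.coe_zero, add_zero, h3] at this
      exact this.symm
    refine ⟨lam, ⟨husc, hsup0, hrep⟩, ?_⟩
    -- uniqueness
    rintro lam' ⟨husc', hsup0', hrep'⟩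
    funext x
    have hlam'_le0 : ∀ y, lam' y ≤ 0 := by
      intro y
      calc lam' y ≤ ⨆ z : X, lam' z := le_iSup _ y
        _ = 0 := hsup0'
    apply le_antisymm
    · -- lam' x ≤ lam x
      apply le_iInf
      intro ψ
      have h5 : lam' x + ((ψ x : ℝ) : EReal) ≤ ((μ ψ : ℝ) : EReal) := by
        rw [hrep' ψ]
        exact le_iSup (fun y => lam' y + ((ψ y : ℝ) : EReal)) x
      rw [EReal.coe_sub]
      rw [EReal.le_sub_iff_add_le (Or.inl (EReal.coe_ne_bot _))
        (Or.inl (EReal.coe_ne_top _))]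
      exact h5
    · -- lam x ≤ lam' x
      by_contra hcon
      push_neg at hcon
      obtain ⟨c, hc1, hc2⟩ := EReal.exists_between_coe_real hcon
      have hc0 : (c : EReal) < 0 := lt_of_lt_of_le hc2 (hlam_le0 x)
      have hcR : c < 0 := by exact_mod_cast hc0
      set Uu : Set X := {y | lam' y < (c : EReal)} with hUu
      have hUopen : IsOpen Uu := husc'.isOpen_preimage c
      have hxU : x ∈ Uu := hc1
      set K : Set X := Uuᶜ with hK
      have hKc : IsClosed K := hUopen.isClosed_compl
      -- K nonempty, else sup lam' ≤ c < 0
      have hKne : K.Nonempty := by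
        by_contra hKe
        rw [Set.not_nonempty_iff_eq_empty] at hKe
        have : (⨆ y : X, lam' y) ≤ (c : EReal) := by
          apply iSup_le
          intro y
          have hyU : y ∈ Uu := by
            by_contra hy
            have hyK : y ∈ K := hy
            rw [hKe] at hyK
            exact hyK
          exact le_of_lt hyU
        rw [hsup0'] at this
        exact absurd (lt_of_le_of_lt this hc0) (lt_irrefl 0)
      have hxK : x ∉ K := fun h => h hxU
      set d : ℝ := Metric.infDist x K with hd
      have hdpos : 0 < d := (hKc.notMem_iff_infDist_pos hKne).1 hxK
      -- build the test function
      set ψ : C(X, ℝ) := ⟨fun y => max c ((c / d) * dist x y),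
        (continuous_const.max ((continuous_const.mul (continuous_const.dist continuous_id)))) ⟩
        with hψ
      have hψx : ψ x = 0 := by
        simp [hψ, dist_self, le_of_lt hcR]
      have hψle0 : ∀ y, ψ y ≤ 0 := by
        intro y
        apply max_le (le_of_lt hcR)
        apply mul_nonpos_of_nonpos_of_nonneg
        · exact le_of_lt (div_neg_of_neg_of_pos hcR hdpos)
        · exact dist_nonneg
      have hψK : ∀ y ∈ K, ψ y = c := by
        intro y hy
        have hdy : d ≤ dist x y := Metric.infDist_le_dist_of_mem hy
        have : (c / d) * dist x y ≤ c := by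
          have h9 : (c / d) * dist x y ≤ (c / d) * d :=
            mul_le_mul_of_nonpos_left hdy (le_of_lt (div_neg_of_neg_of_pos hcR hdpos))
          rwa [div_mul_cancel₀ c (ne_of_gt hdpos)] at h9
        simp [hψ, max_eq_left this]
      have hμψ : μ ψ ≤ c := by
        have h10 : ((μ ψ : ℝ) : EReal) ≤ (c : EReal) := by
          rw [hrep' ψ]
          apply iSup_le
          intro y
          by_cases hy : y ∈ Uu
          · calc lam' y + ((ψ y : ℝ) : EReal)
                ≤ lam' y + (0 : EReal) := by
                  apply add_le_add_right
                  exact_mod_cast hψle0 y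
              _ = lam' y := add_zero _
              _ ≤ (c : EReal) := le_of_lt hy
          · have : ψ y = c := hψK y hy
            rw [this]
            calc lam' y + ((c : ℝ) : EReal) ≤ 0 + (c : EReal) :=
                add_le_add_left (hlam'_le0 y) _
              _ = (c : EReal) := zero_add _
        exact_mod_cast h10
      have h11 : lam x ≤ ((μ ψ - ψ x : ℝ) : EReal) := iInf_le _ ψ
      rw [hψx, sub_zero] at h11
      have h12 : lam x ≤ (c : EReal) := h11.trans (by exact_mod_cast hμψ)
      exact absurd (hc2.trans_le h12) (lt_irrefl _)
  · -- converse part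
    intro lam husc hsup0
    have hlam_le0 : ∀ x, lam x ≤ 0 := fun x => (le_iSup _ x).trans hsup0.le
    obtain ⟨x0, hx0⟩ : ∃ x : X, (-1 : EReal) < lam x := by
      have : (-1 : EReal) < ⨆ x : X, lam x := by
        rw [hsup0]
        have h : ((-1:ℝ):EReal) < ((0:ℝ):EReal) := by
          exact_mod_cast (by norm_num : (-1:ℝ) < (0:ℝ))
        simpa using h
      exact lt_iSup_iff.1 this
    set S : C(X, ℝ) → EReal := fun ψ => ⨆ x : X, lam x + ((ψ x : ℝ) : EReal) with hS
    have hS_ne_top : ∀ ψ, S ψ ≠ ⊤ := by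
      intro ψ
      apply ne_top_of_le_ne_top (EReal.coe_ne_top ‖ψ‖)
      apply iSup_le
      intro x
      calc lam x + ((ψ x : ℝ) : EReal) ≤ 0 + ((ψ x : ℝ) : EReal) :=
          add_le_add_left (hlam_le0 x) _
        _ = ((ψ x : ℝ) : EReal) := zero_add _
        _ ≤ ((‖ψ‖ : ℝ) : EReal) := by
            exact_mod_cast (le_abs_self _).trans (ψ.norm_coe_le_norm x)
    have hS_ne_bot : ∀ ψ, S ψ ≠ ⊥ := by
      intro ψ
      apply ne_bot_of_le_ne_bot (EReal.coe_ne_bot (-1 + ψ x0))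
      calc ((-1 + ψ x0 : ℝ) : EReal) = (-1 : EReal) + ((ψ x0 : ℝ) : EReal) := by
            simp [EReal.coe_add, EReal.coe_neg, EReal.coe_one]
        _ ≤ lam x0 + ((ψ x0 : ℝ) : EReal) := add_le_add_left (le_of_lt hx0) _
        _ ≤ S ψ := le_iSup (fun x => lam x + ((ψ x : ℝ) : EReal)) x0
    have hcoe : ∀ ψ : C(X, ℝ), (((S ψ).toReal : ℝ) : EReal) = S ψ :=
      fun ψ => EReal.coe_toReal (hS_ne_top ψ) (hS_ne_bot ψ)
    have Sadd : ∀ (a : ℝ) (f : C(X, ℝ)),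
        S (ContinuousMap.const X a + f) = S f + (a : EReal) := by
      intro a f
      rw [hS]
      simp only [ContinuousMap.add_apply, ContinuousMap.const_apply]
      rw [ereal_add_iSup a (fun x => lam x + ((f x : ℝ) : EReal))]
      apply iSup_congr
      intro x
      rw [EReal.coe_add, add_comm ((a : ℝ) : EReal) ((f x : ℝ) : EReal), ← add_assoc]
    have Ssup : ∀ f g : C(X, ℝ), S (f ⊔ g) = S f ⊔ S g := by
      intro f g
      rw [hS, ← iSup_sup_eq]
      apply iSup_congr
      intro x
      have hmax : (((f ⊔ g) x : ℝ) : EReal) = ((f x : ℝ) : EReal) ⊔ ((g x : ℝ) : EReal) := by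
        rw [ContinuousMap.sup_apply]
        rcases le_total (f x) (g x) with h | h
        · rw [sup_eq_right.2 h, sup_eq_right.2 (by exact_mod_cast h)]
        · rw [sup_eq_left.2 h, sup_eq_left.2 (by exact_mod_cast h)]
      rw [hmax, ereal_add_sup]
    refine ⟨fun ψ => (S ψ).toReal, ?_, ?_, ?_, ?_⟩
    · intro a f
      show (S (ContinuousMap.const X a + f)).toReal = a + (S f).toReal
      rw [Sadd a f, EReal.toReal_add (hS_ne_top f) (hS_ne_bot f)
        (EReal.coe_ne_top a) (EReal.coe_ne_bot a), EReal.toReal_coe, add_comm]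
    · intro f g
      show (S (f ⊔ g)).toReal = max (S f).toReal (S g).toReal
      rw [Ssup f g]
      rcases le_total (S f) (S g) with h | h
      · rw [sup_eq_right.2 h, max_eq_right
          (EReal.toReal_le_toReal h (hS_ne_bot f) (hS_ne_top g))]
      · rw [sup_eq_left.2 h, max_eq_left
          (EReal.toReal_le_toReal h (hS_ne_bot g) (hS_ne_top f))]
    · have : S 0 = 0 := by
        rw [hS]
        simp only [ContinuousMap.zero_apply, EReal.coe_zero, add_zero]
        exact hsup0
      show (S 0).toReal = 0
      rw [this, EReal.toReal_zero]
    · intro ψ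
      exact hcoe ψ
end
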